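/- arXiv:1003.4783 — 4 statements merged into one kernel-verified Lean document; each statement's English description precedes it below -/
import Mathlib

section
/- For integers $j, j', k, k', l, l'$ with $k, k' \ge 0$, the dilated-translated Walsh functions $w_{j,k,l}$ and $w_{j',k',l'}$ are orthogonal in $L_2(\mathbb{R})$ if and only if the corresponding tiles $T_{j,k,l}$ and $T_{j',k',l'}$ are disjoint. -/
open MeasureTheory Complex
open scoped BigOperators Classical

/-- The `k`-th base-`b` Walsh function on `[0,1)`, extended by zero to `ℝ`. -/
noncomputable def wal (b : ℕ) (k : ℕ) (x : ℝ) : ℂ :=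
  if x ∈ Set.Ico (0:ℝ) 1 then
    Complex.exp (2 * Real.pi * Complex.I / b *
      (∑ i ∈ Finset.range (k+1), ((k / b ^ i % b : ℕ) : ℂ) * ((⌊x * (b:ℝ) ^ (i+1)⌋ % (b:ℤ) : ℤ) : ℂ)))
  else 0

/-- The dilated and translated Walsh function `w_{j,k,l}(x) = b^{-j/2} wal_k (b^{-j} x - l)`. -/
noncomputable def wdil (b : ℕ) (j : ℤ) (k : ℕ) (l : ℤ) (x : ℝ) : ℂ :=
  (((b:ℝ) ^ (-(j:ℝ)/2) : ℝ) : ℂ) * wal b k ((b:ℝ) ^ (-j) * x - (l:ℝ))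

/-- The tile `T_{j,k,l} = [b^j l, b^j(l+1)) × [b^{-j} k, b^{-j}(k+1))`. -/
def tile (b : ℕ) (j : ℤ) (k : ℕ) (l : ℤ) : Set (ℝ × ℝ) :=
  Set.Ico ((b:ℝ)^j * (l:ℝ)) ((b:ℝ)^j * ((l:ℝ)+1)) ×ˢ
  Set.Ico ((b:ℝ)^(-j) * (k:ℝ)) ((b:ℝ)^(-j) * ((k:ℝ)+1))

noncomputable def srw (b : ℕ) (k : ℕ) (x : ℝ) (M : ℕ) : ℝ :=
  ∑ i ∈ Finset.range M, ((k / b ^ i % b : ℕ) : ℝ) * ((⌊x * (b:ℝ) ^ (i+1)⌋ % (b:ℤ) : ℤ) : ℝ)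

lemma wal_of_mem (b k : ℕ) {x : ℝ} (hx : x ∈ Set.Ico (0:ℝ) 1) :
    wal b k x = Complex.exp (((2 * Real.pi / b * srw b k x (k+1) : ℝ) : ℂ) * Complex.I) := by
  rw [wal, if_pos hx]
  congr 1
  rw [srw]
  push_cast
  rw [Finset.mul_sum, Finset.mul_sum, Finset.sum_mul]
  refine Finset.sum_congr rfl fun i _ => ?_
  ring

lemma wal_of_not_mem (b k : ℕ) {x : ℝ} (hx : x ∉ Set.Ico (0:ℝ) 1) :
    wal b k x = 0 := if_neg hx

lemma srw_ext (b : ℕ) (hb : 2 ≤ b) (k : ℕ) (x : ℝ) {M : ℕ} (hM : k + 1 ≤ M) :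
    srw b k x M = srw b k x (k+1) := by
  rw [srw, srw]
  refine (Finset.sum_subset (Finset.range_subset_range.mpr hM) fun i _ hi => ?_).symm
  have hik : k + 1 ≤ i := by simpa using hi
  have hk : k < b ^ i := by
    calc k < 2 ^ i := lt_of_lt_of_le (Nat.lt_two_pow_self (n := k)) (Nat.pow_le_pow_right (by norm_num) (by omega))
    _ ≤ b ^ i := Nat.pow_le_pow_left hb i
  rw [Nat.div_eq_of_lt hk]
  simp

lemma wal_norm (b k : ℕ) (x : ℝ) :
    ‖wal b k x‖ = Set.indicator (Set.Ico (0:ℝ) 1) (fun _ => (1:ℝ)) x := by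
  by_cases hx : x ∈ Set.Ico (0:ℝ) 1
  · rw [wal_of_mem b k hx, Set.indicator_of_mem hx,
      Complex.norm_exp_ofReal_mul_I]
  · rw [wal_of_not_mem b k hx, Set.indicator_of_notMem hx, norm_zero]

lemma wal_norm_le (b k : ℕ) (x : ℝ) : ‖wal b k x‖ ≤ 1 := by
  rw [wal_norm]
  by_cases hx : x ∈ Set.Ico (0:ℝ) 1 <;> simp [hx]

lemma wal_measurable (b k : ℕ) : Measurable (wal b k) := by
  unfold wal
  refine Measurable.ite (measurableSet_Ico (a := (0:ℝ)) (b := 1)) ?_ measurable_const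
  refine (Complex.measurable_exp).comp (Measurable.const_mul ?_ _)
  refine Finset.measurable_sum _ fun i _ => Measurable.const_mul ?_ _
  exact (measurable_from_top (f := fun n : ℤ => ((n % (b:ℤ) : ℤ) : ℂ))).comp
    ((measurable_id.mul_const _).floor)

lemma wal_integrable_aux (b k k' : ℕ) (α γ : ℝ) :
    Integrable (fun x : ℝ => wal b k x * (starRingEnd ℂ) (wal b k' (α * x + γ))) := by
  have hmeas : Measurable fun x : ℝ => wal b k x * (starRingEnd ℂ) (wal b k' (α * x + γ)) := by
    refine (wal_measurable b k).mul ?_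
    exact continuous_star.measurable.comp ((wal_measurable b k').comp (((measurable_id.const_mul α).add_const γ)))
  have hbound : Integrable (Set.indicator (Set.Ico (0:ℝ) 1) (fun _ => (1:ℝ))) := by
    rw [integrable_indicator_iff measurableSet_Ico]
    refine (integrableOn_const_iff).mpr (Or.inr ?_)
    simp [Real.volume_Ico]
  refine hbound.mono' hmeas.aestronglyMeasurable (Filter.Eventually.of_forall fun x => ?_)
  by_cases hx : x ∈ Set.Ico (0:ℝ) 1
  · rw [Set.indicator_of_mem hx, norm_mul, RCLike.norm_conj]
    calc ‖wal b k x‖ * ‖wal b k' (α * x + γ)‖ ≤ 1 * 1 :=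
          mul_le_mul (wal_norm_le b k x) (wal_norm_le b k' _) (norm_nonneg _) zero_le_one
    _ = 1 := one_mul 1
  · rw [Set.indicator_of_notMem hx, norm_mul, wal_of_not_mem b k hx, norm_zero, zero_mul]

lemma srw_rec (b : ℕ) (hb : 2 ≤ b) (k d : ℕ) (hd : d < b) {u : ℝ} (hu : u ∈ Set.Ico (0:ℝ) 1) :
    srw b k ((u + d)/b) (k+1) = ((k % b) * d : ℕ) + srw b (k/b) u (k/b + 1) := by
  have hbne : (b:ℝ) ≠ 0 := by positivity
  have hu0 : ⌊u⌋ = 0 := Int.floor_eq_zero_iff.mpr hu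
  have hf0 : ((k / b ^ 0 % b : ℕ) : ℝ) * ((⌊(u + d)/b * (b:ℝ) ^ (0+1)⌋ % (b:ℤ) : ℤ) : ℝ)
      = ((k % b) * d : ℕ) := by
    have h1 : (u + d)/b * (b:ℝ) ^ (0+1) = u + d := by
      rw [pow_one]; field_simp
    have h2 : ⌊u + (d:ℝ)⌋ = (d:ℤ) := by
      rw [Int.floor_add_natCast, hu0, zero_add]
    have h3 : ((d:ℤ)) % (b:ℤ) = d := Int.emod_eq_of_lt (by positivity) (by exact_mod_cast hd)
    rw [h1, h2, h3]
    push_cast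
    simp
  have hfs : ∀ i : ℕ, ((k / b ^ (i+1) % b : ℕ) : ℝ) *
      ((⌊(u + d)/b * (b:ℝ) ^ (i+1+1)⌋ % (b:ℤ) : ℤ) : ℝ)
      = ((k / b / b ^ i % b : ℕ) : ℝ) * ((⌊u * (b:ℝ) ^ (i+1)⌋ % (b:ℤ) : ℤ) : ℝ) := by
    intro i
    have h1 : (u + d)/b * (b:ℝ) ^ (i+1+1) = u * (b:ℝ)^(i+1) + ((d * b^(i+1) : ℕ) : ℝ) := by
      rw [pow_succ']
      push_cast
      field_simp
    have h2 : ⌊u * (b:ℝ)^(i+1) + ((d * b^(i+1) : ℕ) : ℝ)⌋ = ⌊u * (b:ℝ)^(i+1)⌋ + (d * b^(i+1) : ℕ) :=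
      Int.floor_add_natCast _ _
    have h3 : (⌊u * (b:ℝ)^(i+1)⌋ + ((d * b^(i+1) : ℕ) : ℤ)) % (b:ℤ) = ⌊u * (b:ℝ)^(i+1)⌋ % (b:ℤ) := by
      have : ((d * b^(i+1) : ℕ) : ℤ) = (d * b^i : ℤ) * (b:ℤ) := by push_cast [pow_succ]; ring
      rw [this, Int.add_mul_emod_self_right]
    have h4 : k / b ^ (i+1) = k / b / b ^ i := by
      rw [Nat.div_div_eq_div_mul, ← pow_succ']
    rw [h1, h2, h3, h4]
  rw [srw, Finset.sum_range_succ']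
  rcases Nat.eq_zero_or_pos k with hk | hk
  · subst hk
    simp [srw]
  · have hdiv : k / b + 1 ≤ k := by
      have := Nat.div_lt_self hk (by omega : 1 < b)
      omega
    rw [hf0]
    have hsum : ∑ i ∈ Finset.range k, ((k / b ^ (i+1) % b : ℕ) : ℝ) *
        ((⌊(u + d)/b * (b:ℝ) ^ (i+1+1)⌋ % (b:ℤ) : ℤ) : ℝ) = srw b (k/b) u k := by
      rw [srw]; exact Finset.sum_congr rfl fun i _ => hfs i
    rw [hsum, srw_ext b hb (k/b) u hdiv]
    ring

lemma wal_rec (b : ℕ) (hb : 2 ≤ b) (k d : ℕ) (hd : d < b) {u : ℝ} (hu : u ∈ Set.Ico (0:ℝ) 1) :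
    wal b k ((u + d)/b) =
      Complex.exp (((2 * Real.pi / b * ((k % b) * d : ℕ) : ℝ) : ℂ) * Complex.I) *
        wal b (k/b) u := by
  have hb0 : (0:ℝ) < b := by positivity
  have hx : (u + d)/b ∈ Set.Ico (0:ℝ) 1 := by
    obtain ⟨h0, h1⟩ := hu
    constructor
    · positivity
    · rw [div_lt_one hb0]
      have : (d:ℝ) + 1 ≤ b := by exact_mod_cast hd
      linarith
  rw [wal_of_mem b k hx, wal_of_mem b (k/b) hu, ← Complex.exp_add]
  congr 1
  rw [srw_rec b hb k d hd hu]
  push_cast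
  ring

lemma wal_shift (b : ℕ) (hb : 2 ≤ b) :
    ∀ m k c : ℕ, c < b ^ m → ∃ φ : ℂ, φ ≠ 0 ∧ ∀ z ∈ Set.Ico (0:ℝ) 1,
      wal b k ((z + c) / ((b:ℝ)^m)) = φ * wal b (k / b ^ m) z := by
  intro m
  induction m with
  | zero =>
    intro k c hc
    have hc0 : c = 0 := by simpa using hc
    subst hc0
    exact ⟨1, one_ne_zero, fun z _ => by simp⟩
  | succ m IH =>
    intro k c hc
    have hbm : 0 < b ^ m := by positivity
    have hd : c / b ^ m < b := by
      rw [Nat.div_lt_iff_lt_mul hbm]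
      calc c < b ^ (m+1) := hc
      _ = b * b ^ m := by rw [pow_succ']
    have hr : c % b ^ m < b ^ m := Nat.mod_lt _ hbm
    obtain ⟨φ', hφ'0, hφ'⟩ := IH (k / b) (c % b ^ m) hr
    refine ⟨Complex.exp (((2 * Real.pi / b * (((k % b) * (c / b ^ m) : ℕ) : ℝ) : ℝ) : ℂ) * Complex.I) * φ',
      mul_ne_zero (Complex.exp_ne_zero _) hφ'0, fun z hz => ?_⟩
    have hu : (z + (c % b ^ m : ℕ)) / ((b:ℝ)^m) ∈ Set.Ico (0:ℝ) 1 := by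
      obtain ⟨h0, h1⟩ := hz
      have hb0 : (0:ℝ) < (b:ℝ)^m := by positivity
      constructor
      · positivity
      · rw [div_lt_one hb0]
        have : ((c % b ^ m : ℕ) : ℝ) + 1 ≤ (b:ℝ)^m := by exact_mod_cast hr
        linarith
    have harg : (z + c) / ((b:ℝ)^(m+1)) =
        ((z + (c % b ^ m : ℕ)) / ((b:ℝ)^m) + (c / b ^ m : ℕ)) / b := by
      have h1 : (b:ℝ)^(m+1) = (b:ℝ)^m * b := by rw [pow_succ]
      have h2 : (c:ℝ) = ((c % b ^ m : ℕ) : ℝ) + ((c / b ^ m : ℕ) : ℝ) * ((b:ℝ)^m) := by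
        exact_mod_cast (Nat.mod_add_div' c (b ^ m)).symm
      have hbm0 : ((b:ℝ)^m) ≠ 0 := by positivity
      rw [h2, h1, ← add_assoc, div_add' _ _ _ hbm0, div_div]
    rw [harg, wal_rec b hb k (c / b ^ m) hd hu, hφ' z hz]
    have hdiv : k / b / b ^ m = k / b ^ (m+1) := by
      rw [Nat.div_div_eq_div_mul, ← pow_succ']
    rw [hdiv]
    ring

lemma integral_eq_Ioo (f : ℝ → ℂ) (hf : ∀ x, x ∉ Set.Ico (0:ℝ) 1 → f x = 0) :
    (∫ x, f x) = ∫ x in Set.Ioo (0:ℝ) 1, f x := by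
  have h1 : (∫ x, f x) = ∫ x in Set.Ico (0:ℝ) 1, f x := by
    rw [← integral_indicator measurableSet_Ico]
    congr 1
    funext x
    by_cases hx : x ∈ Set.Ico (0:ℝ) 1
    · rw [Set.indicator_of_mem hx]
    · rw [Set.indicator_of_notMem hx, hf x hx]
  rw [h1, integral_Ico_eq_integral_Ioo]

lemma integral_eq_01 (f : ℝ → ℂ) (hf : ∀ x, x ∉ Set.Ico (0:ℝ) 1 → f x = 0) :
    (∫ x, f x) = ∫ x in (0:ℝ)..1, f x := by
  rw [intervalIntegral.integral_of_le zero_le_one, integral_Ioc_eq_integral_Ioo,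
    integral_eq_Ioo f hf]

lemma integral_piece (b : ℕ) (hb : 2 ≤ b) (f : ℝ → ℂ) (hf : Integrable f) :
    (∫ x in (0:ℝ)..1, f x) =
      ∑ d ∈ Finset.range b, (b:ℂ)⁻¹ * ∫ u in (0:ℝ)..1, f ((u + d)/b) := by
  have hb0 : (0:ℝ) < b := by positivity
  have hbne : (b:ℝ) ≠ 0 := ne_of_gt hb0
  have key : ∀ d : ℕ, (∫ u in (0:ℝ)..1, f ((u + d)/b)) =
      (b:ℝ) • ∫ x in ((d:ℝ)/b)..(((d:ℝ)+1)/b), f x := by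
    intro d
    have h1 : (∫ u in (0:ℝ)..1, f ((u + d)/b)) = ∫ v in (0+(d:ℝ))..(1+(d:ℝ)), f (v/b) :=
      intervalIntegral.integral_comp_add_right (fun v => f (v/b)) (d:ℝ)
    rw [h1, intervalIntegral.integral_comp_div f hbne]
    norm_num [add_comm]
  have adj : (∑ d ∈ Finset.range b, ∫ x in (((d:ℕ):ℝ)/b)..((((d:ℕ):ℝ)+1)/b), f x)
      = ∫ x in (0:ℝ)..1, f x := by
    have := intervalIntegral.sum_integral_adjacent_intervals
      (a := fun i : ℕ => (i:ℝ)/b) (n := b) (μ := volume) (f := f)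
      (fun i _ => hf.intervalIntegrable)
    simpa [hbne] using this
  rw [← adj]
  refine Finset.sum_congr rfl fun d _ => ?_
  rw [key d]
  push_cast
  rw [Complex.real_smul, ← mul_assoc]
  norm_num
  rw [inv_mul_cancel₀ (by exact_mod_cast hbne : (b:ℂ) ≠ 0), one_mul]

lemma wal_zero_eq (b : ℕ) (x : ℝ) :
    wal b 0 x = Set.indicator (Set.Ico (0:ℝ) 1) (fun _ => (1:ℂ)) x := by
  by_cases hx : x ∈ Set.Ico (0:ℝ) 1
  · rw [Set.indicator_of_mem hx, wal, if_pos hx]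
    norm_num
  · rw [Set.indicator_of_notMem hx, wal, if_neg hx]

lemma walsh_orthonormal (b : ℕ) (hb : 2 ≤ b) (n n' : ℕ) :
    (∫ x : ℝ, wal b n x * (starRingEnd ℂ) (wal b n' x)) = if n = n' then 1 else 0 := by
  have hbC : (b:ℂ) ≠ 0 := by
    simp only [ne_eq, Nat.cast_eq_zero]; omega
  suffices H : ∀ N n n' : ℕ, n + n' ≤ N →
      (∫ x : ℝ, wal b n x * (starRingEnd ℂ) (wal b n' x)) = if n = n' then 1 else 0 from
    H (n + n') n n' le_rfl
  intro N
  induction N with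
  | zero =>
    intro n n' h
    have hn : n = 0 := by omega
    have hn' : n' = 0 := by omega
    subst hn; subst hn'
    have : ∀ x : ℝ, wal b 0 x * (starRingEnd ℂ) (wal b 0 x)
        = Set.indicator (Set.Ico (0:ℝ) 1) (fun _ => (1:ℂ)) x := by
      intro x
      rw [wal_zero_eq]
      by_cases hx : x ∈ Set.Ico (0:ℝ) 1
      · rw [Set.indicator_of_mem hx]; simp
      · rw [Set.indicator_of_notMem hx]; simp
    rw [if_pos rfl]
    calc (∫ x : ℝ, wal b 0 x * (starRingEnd ℂ) (wal b 0 x))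
        = ∫ x : ℝ, Set.indicator (Set.Ico (0:ℝ) 1) (fun _ => (1:ℂ)) x := by
          congr 1; funext x; exact this x
      _ = ∫ x in Set.Ico (0:ℝ) 1, (1:ℂ) := integral_indicator measurableSet_Ico
      _ = 1 := by simp [Real.volume_Ico]
  | succ N IH =>
    intro n n' h
    by_cases h0 : n = 0 ∧ n' = 0
    · obtain ⟨hn, hn'⟩ := h0
      subst hn; subst hn'
      exact IH 0 0 (Nat.zero_le N)
    -- recursion step
    · set ζ : ℂ := Complex.exp ((((2 * Real.pi / b) * (((n % b : ℕ) : ℝ) - ((n' % b : ℕ) : ℝ)) : ℝ) : ℂ) * Complex.I) with hζdef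
      have hsupp : ∀ x : ℝ, x ∉ Set.Ico (0:ℝ) 1 →
          wal b n x * (starRingEnd ℂ) (wal b n' x) = 0 := fun x hx => by
        rw [wal_of_not_mem b n hx, zero_mul]
      have hsupp' : ∀ x : ℝ, x ∉ Set.Ico (0:ℝ) 1 →
          wal b (n/b) x * (starRingEnd ℂ) (wal b (n'/b) x) = 0 := fun x hx => by
        rw [wal_of_not_mem b (n/b) hx, zero_mul]
      have hint : Integrable (fun x : ℝ => wal b n x * (starRingEnd ℂ) (wal b n' x)) := by
        have := wal_integrable_aux b n n' 1 0
        simpa using this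
      -- each piece
      have hpiece : ∀ d : ℕ, d < b → (∫ u in (0:ℝ)..1,
          wal b n ((u + d)/b) * (starRingEnd ℂ) (wal b n' ((u + d)/b))) =
          ζ ^ d * ∫ x : ℝ, wal b (n/b) x * (starRingEnd ℂ) (wal b (n'/b) x) := by
        intro d hd
        rw [intervalIntegral.integral_of_le zero_le_one, integral_Ioc_eq_integral_Ioo]
        have hptw : ∀ u ∈ Set.Ioo (0:ℝ) 1,
            wal b n ((u + d)/b) * (starRingEnd ℂ) (wal b n' ((u + d)/b)) =
            ζ ^ d * (wal b (n/b) u * (starRingEnd ℂ) (wal b (n'/b) u)) := by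
          intro u hu
          have hu' : u ∈ Set.Ico (0:ℝ) 1 := ⟨le_of_lt hu.1, hu.2⟩
          rw [wal_rec b hb n d hd hu', wal_rec b hb n' d hd hu']
          rw [map_mul]
          have hconj : (starRingEnd ℂ) (Complex.exp
              (((2 * Real.pi / b * ((n' % b) * d : ℕ) : ℝ) : ℂ) * Complex.I)) =
              Complex.exp ((((-(2 * Real.pi / b * ((n' % b) * d : ℕ)) : ℝ)) : ℂ) * Complex.I) := by
            rw [← Complex.exp_conj]
            congr 1
            rw [map_mul, Complex.conj_ofReal, Complex.conj_I]
            push_cast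
            try ring
          rw [hconj]
          have hζd : Complex.exp (((2 * Real.pi / b * ((n % b) * d : ℕ) : ℝ) : ℂ) * Complex.I) *
              Complex.exp ((((-(2 * Real.pi / b * ((n' % b) * d : ℕ)) : ℝ)) : ℂ) * Complex.I) = ζ ^ d := by
            rw [← Complex.exp_add, hζdef, ← Complex.exp_nat_mul]
            congr 1
            push_cast
            ring
          rw [← hζd]
          ring
        rw [setIntegral_congr_fun measurableSet_Ioo hptw]
        rw [integral_const_mul (μ := volume.restrict (Set.Ioo (0:ℝ) 1)) (ζ ^ d)
          (fun x => wal b (n/b) x * (starRingEnd ℂ) (wal b (n'/b) x))]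
        rw [← integral_eq_Ioo _ hsupp']
      -- assemble
      have hmain : (∫ x : ℝ, wal b n x * (starRingEnd ℂ) (wal b n' x)) =
          (b:ℂ)⁻¹ * (∑ d ∈ Finset.range b, ζ ^ d) *
            ∫ x : ℝ, wal b (n/b) x * (starRingEnd ℂ) (wal b (n'/b) x) := by
        rw [integral_eq_01 _ hsupp, integral_piece b hb _ hint, mul_assoc,
          Finset.sum_mul, Finset.mul_sum]
        refine Finset.sum_congr rfl fun d hd => ?_
        rw [hpiece d (Finset.mem_range.mp hd)]
      have hIH : (∫ x : ℝ, wal b (n/b) x * (starRingEnd ℂ) (wal b (n'/b) x)) =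
          if n/b = n'/b then 1 else 0 := by
        refine IH (n/b) (n'/b) ?_
        have d1 : n / b < n ∨ n = 0 := by
          rcases Nat.eq_zero_or_pos n with h1 | h1
          · exact Or.inr h1
          · exact Or.inl (Nat.div_lt_self h1 (by omega))
        have d2 : n' / b < n' ∨ n' = 0 := by
          rcases Nat.eq_zero_or_pos n' with h1 | h1
          · exact Or.inr h1
          · exact Or.inl (Nat.div_lt_self h1 (by omega))
        have d3 : n / b ≤ n := Nat.div_le_self n b
        have d4 : n' / b ≤ n' := Nat.div_le_self n' b
        omega
      rw [hmain, hIH]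
      by_cases hmod : n % b = n' % b
      · have hζ1 : ζ = 1 := by
          rw [hζdef, hmod]
          norm_num
        rw [hζ1]
        simp only [one_pow, Finset.sum_const, Finset.card_range, nsmul_eq_mul, mul_one]
        rw [inv_mul_cancel₀ hbC, one_mul]
        have hiff : (n = n') ↔ (n / b = n' / b) := by
          constructor
          · rintro rfl; rfl
          · intro hdiv
            have e1 := Nat.div_add_mod n b
            have e2 := Nat.div_add_mod n' b
            rw [hdiv, hmod] at e1
            rw [e2] at e1
            exact e1.symm
        by_cases hnn : n = n'
        · rw [if_pos hnn, if_pos (hiff.mp hnn)]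
        · rw [if_neg hnn, if_neg (fun hdiv => hnn (hiff.mpr hdiv))]
      · -- geometric sum vanishes
        have hΔr : (((n % b : ℕ) : ℝ) - ((n' % b : ℕ) : ℝ)) =
            (((n % b : ℕ) - (n' % b : ℕ) : ℤ) : ℝ) := by push_cast; norm_cast
        set Δz : ℤ := ((n % b : ℕ) : ℤ) - ((n' % b : ℕ) : ℤ) with hΔdef
        have hbR : (b:ℝ) ≠ 0 := by positivity
        have hζb : ζ ^ b = 1 := by
          rw [hζdef, ← Complex.exp_nat_mul]
          have harg : (b:ℂ) * ((((2 * Real.pi / b) * (((n % b : ℕ) : ℝ) - ((n' % b : ℕ) : ℝ)) : ℝ) : ℂ) * Complex.I)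
              = (Δz : ℂ) * (2 * Real.pi * Complex.I) := by
            rw [hΔr]
            push_cast
            have hbC' : (b:ℂ) ≠ 0 := hbC
            field_simp
          rw [harg, Complex.exp_int_mul_two_pi_mul_I]
        have hζne : ζ ≠ 1 := by
          intro hζ1
          rw [hζdef, Complex.exp_eq_one_iff] at hζ1
          obtain ⟨m, hm⟩ := hζ1
          have hm' : ((2 * Real.pi / b) * (((n % b : ℕ) : ℝ) - ((n' % b : ℕ) : ℝ)) : ℝ) = 2 * Real.pi * m := by
            have h2 : ((m:ℂ) * (2 * Real.pi * Complex.I)) = (((2 * Real.pi * m : ℝ)) : ℂ) * Complex.I := by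
              push_cast; ring
            rw [h2] at hm
            have := mul_right_cancel₀ Complex.I_ne_zero hm
            exact_mod_cast this
          rw [hΔr] at hm'
          have h2π : (2 * Real.pi) ≠ 0 := by positivity
          have hΔ : ((Δz : ℝ)) = m * b := by
            have h1 : 2 * Real.pi * ((Δz:ℝ)) = 2 * Real.pi * (m * b) := by
              have h3 := congrArg (fun t => t * (b:ℝ)) hm'
              calc 2 * Real.pi * ((Δz:ℝ)) = 2 * Real.pi / b * ((Δz:ℝ)) * b := by
                    field_simp
                _ = 2 * Real.pi * m * b := h3
                _ = 2 * Real.pi * (m * b) := by ring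
            exact mul_left_cancel₀ h2π h1
          have hΔz : Δz = m * b := by exact_mod_cast hΔ
          have h1 : ((n % b : ℕ) : ℤ) < b := by exact_mod_cast Nat.mod_lt n (by omega : 0 < b)
          have h2 : ((n' % b : ℕ) : ℤ) < b := by exact_mod_cast Nat.mod_lt n' (by omega : 0 < b)
          have h3 : (0:ℤ) ≤ ((n % b : ℕ) : ℤ) := Int.natCast_nonneg _
          have h4 : (0:ℤ) ≤ ((n' % b : ℕ) : ℤ) := Int.natCast_nonneg _
          have h5 : ((n % b : ℕ) : ℤ) ≠ ((n' % b : ℕ) : ℤ) := by exact_mod_cast hmod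
          have hb' : (0:ℤ) < b := by exact_mod_cast (by omega : 0 < b)
          rcases lt_trichotomy m 0 with hm0 | hm0 | hm0
          · have hmle : m ≤ -1 := by omega
            have hmb : m * (b:ℤ) ≤ -1 * (b:ℤ) := mul_le_mul_of_nonneg_right hmle (by omega)
            rw [hΔdef] at hΔz
            linarith
          · rw [hm0, zero_mul] at hΔz
            rw [hΔdef] at hΔz
            exact h5 (by linarith)
          · have hmle : (1:ℤ) ≤ m := by omega
            have hmb : (1:ℤ) * (b:ℤ) ≤ m * (b:ℤ) := mul_le_mul_of_nonneg_right hmle (by omega)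
            rw [hΔdef] at hΔz
            linarith
        have hgeom : (∑ d ∈ Finset.range b, ζ ^ d) = 0 := by
          rw [geom_sum_eq hζne, hζb, sub_self, zero_div]
        rw [hgeom]
        have hnn : ¬ (n = n') := by
          intro hnn; rw [hnn] at hmod; exact hmod rfl
        rw [if_neg hnn]
        ring

lemma nat_div_eq_iff (a c : ℕ) {e : ℕ} (he : 0 < e) : a / e = c ↔ (c * e ≤ a ∧ a < (c+1) * e) := by
  constructor
  · rintro rfl
    refine ⟨Nat.div_mul_le_self a e, ?_⟩
    have h1 := Nat.div_add_mod a e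
    have h2 := Nat.mod_lt a he
    have h3 : (a / e + 1) * e = e * (a / e) + e := by ring
    omega
  · rintro ⟨h1, h2⟩
    exact Nat.div_eq_of_lt_le h1 h2

lemma tile_char (b : ℕ) (hb : 2 ≤ b) (j j' l l' : ℤ) (k k' : ℕ) (hjj : j' ≤ j) :
    Disjoint (tile b j k l) (tile b j' k' l') ↔
      ¬(((b:ℤ) ^ (j - j').toNat * l ≤ l' ∧ l' < (b:ℤ) ^ (j - j').toNat * (l + 1)) ∧
        k / b ^ (j - j').toNat = k') := by
  set m := (j - j').toNat with hmdef
  have hB0 : (0:ℝ) < (b:ℝ) := by positivity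
  have hBne : (b:ℝ) ≠ 0 := ne_of_gt hB0
  have hm : j = j' + (m:ℤ) := by
    rw [hmdef, Int.toNat_of_nonneg (sub_nonneg.mpr hjj)]; ring
  have hbm0 : (0:ℕ) < b ^ m := by positivity
  have hpow : (b:ℝ) ^ j = (b:ℝ) ^ j' * ((b ^ m : ℕ) : ℝ) := by
    rw [hm, zpow_add₀ hBne]
    push_cast
    rw [zpow_natCast]
  have hpow' : (b:ℝ) ^ (-j') = (b:ℝ) ^ (-j) * ((b ^ m : ℕ) : ℝ) := by
    have : -j' = -j + (m:ℤ) := by omega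
    rw [this, zpow_add₀ hBne]
    push_cast
    rw [zpow_natCast]
  have hBj' : (0:ℝ) < (b:ℝ) ^ j' := zpow_pos hB0 j'
  have hBmj : (0:ℝ) < (b:ℝ) ^ (-j) := zpow_pos hB0 (-j)
  rw [tile, tile, Set.disjoint_iff_inter_eq_empty, Set.prod_inter_prod, Set.prod_eq_empty_iff,
    Set.Ico_inter_Ico, Set.Ico_inter_Ico, Set.Ico_eq_empty_iff, Set.Ico_eq_empty_iff]
  have htime : ((b:ℝ)^j * (l:ℝ)) ⊔ ((b:ℝ)^j' * (l':ℝ)) < ((b:ℝ)^j * ((l:ℝ)+1)) ⊓ ((b:ℝ)^j' * ((l':ℝ)+1))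
      ↔ ((b:ℤ) ^ m * l ≤ l' ∧ l' < (b:ℤ) ^ m * (l + 1)) := by
    rw [lt_inf_iff, sup_lt_iff, sup_lt_iff]
    constructor
    · rintro ⟨⟨_, h1⟩, h2, _⟩
      constructor
      · -- from h2 : B^j * l < B^j' * (l'+1)
        rw [hpow, mul_assoc] at h2
        have := (mul_lt_mul_iff_right₀ hBj').mp h2
        have hz : ((b:ℤ)^m * l : ℝ) < (l':ℝ) + 1 := by push_cast at this ⊢; linarith
        have : (b:ℤ)^m * l < l' + 1 := by exact_mod_cast hz
        omega
      · -- from h1 : B^j' * l' < B^j * (l+1)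
        rw [hpow, mul_assoc] at h1
        have := (mul_lt_mul_iff_right₀ hBj').mp h1
        have hz : (l':ℝ) < ((b:ℤ)^m * (l+1) : ℝ) := by push_cast at this ⊢; linarith
        exact_mod_cast hz
    · rintro ⟨h1, h2⟩
      have hr1 : ((b^m:ℕ):ℝ) * (l:ℝ) ≤ (l':ℝ) := by
        have : ((b:ℤ)^m * l : ℝ) ≤ (l':ℝ) := by exact_mod_cast h1
        push_cast at this ⊢; linarith
      have hr2 : (l':ℝ) < ((b^m:ℕ):ℝ) * ((l:ℝ)+1) := by
        have : (l':ℝ) < ((b:ℤ)^m * (l+1) : ℝ) := by exact_mod_cast h2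
        push_cast at this ⊢; linarith
      have hl1 : (1:ℝ) ≤ ((b^m:ℕ):ℝ) := by
        have : (1:ℕ) ≤ b ^ m := hbm0
        exact_mod_cast this
      refine ⟨⟨?_, ?_⟩, ?_, ?_⟩
      · exact mul_lt_mul_of_pos_left (by linarith) (zpow_pos hB0 j)
      · rw [hpow, mul_assoc]
        refine (mul_lt_mul_iff_right₀ hBj').mpr ?_
        nlinarith
      · rw [hpow, mul_assoc]
        refine (mul_lt_mul_iff_right₀ hBj').mpr ?_
        nlinarith
      · exact mul_lt_mul_of_pos_left (by linarith) hBj'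
  have hfreq : ((b:ℝ)^(-j) * (k:ℝ)) ⊔ ((b:ℝ)^(-j') * (k':ℝ)) <
      ((b:ℝ)^(-j) * ((k:ℝ)+1)) ⊓ ((b:ℝ)^(-j') * ((k':ℝ)+1)) ↔ k / b ^ m = k' := by
    rw [lt_inf_iff, sup_lt_iff, sup_lt_iff, nat_div_eq_iff k k' hbm0]
    constructor
    · rintro ⟨⟨_, h1⟩, h2, _⟩
      -- h1 : B^{-j'} k' < B^{-j} (k+1) ; h2 : B^{-j} k < B^{-j'} (k'+1)
      rw [hpow', mul_assoc] at h1 h2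
      have h1' := (mul_lt_mul_iff_right₀ hBmj).mp h1
      have h2' := (mul_lt_mul_iff_right₀ hBmj).mp h2
      constructor
      · have hz : ((k' * b ^ m : ℕ) : ℝ) < (k:ℝ) + 1 := by push_cast at h1' ⊢; linarith
        have : (k' * b ^ m : ℕ) < k + 1 := by exact_mod_cast hz
        omega
      · have hz : ((k:ℕ):ℝ) < (((k'+1) * b ^ m : ℕ) : ℝ) := by push_cast at h2' ⊢; linarith
        exact_mod_cast hz
    · rintro ⟨h1, h2⟩
      have hr1 : ((b^m:ℕ):ℝ) * (k':ℝ) ≤ (k:ℝ) := by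
        have : ((k' * b ^ m : ℕ):ℝ) ≤ (k:ℝ) := by exact_mod_cast h1
        push_cast at this ⊢; linarith
      have hr2 : (k:ℝ) < ((b^m:ℕ):ℝ) * ((k':ℝ)+1) := by
        have : ((k:ℕ):ℝ) < (((k'+1) * b ^ m : ℕ):ℝ) := by exact_mod_cast h2
        push_cast at this ⊢; linarith
      have hl1 : (1:ℝ) ≤ ((b^m:ℕ):ℝ) := by
        have : (1:ℕ) ≤ b ^ m := hbm0
        exact_mod_cast this
      refine ⟨⟨?_, ?_⟩, ?_, ?_⟩
      · exact mul_lt_mul_of_pos_left (by linarith) hBmj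
      · rw [hpow', mul_assoc]
        refine (mul_lt_mul_iff_right₀ hBmj).mpr ?_
        nlinarith
      · rw [hpow', mul_assoc]
        refine (mul_lt_mul_iff_right₀ hBmj).mpr ?_
        nlinarith
      · rw [hpow']
        have : (0:ℝ) < (b:ℝ)^(-j) * ((b^m:ℕ):ℝ) := by positivity
        exact mul_lt_mul_of_pos_left (by linarith) this
  constructor
  · rintro (h | h) ⟨hc1, hc2⟩
    · exact h (htime.mpr hc1)
    · exact h (hfreq.mpr hc2)
  · intro hc
    by_cases ht : ((b:ℤ) ^ m * l ≤ l' ∧ l' < (b:ℤ) ^ m * (l + 1))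
    · right
      intro hlt
      exact hc ⟨ht, hfreq.mp hlt⟩
    · left
      intro hlt
      exact ht (htime.mp hlt)

lemma integral_char (b : ℕ) (hb : 2 ≤ b) (j j' l l' : ℤ) (k k' : ℕ) (hjj : j' ≤ j) :
    (∫ x : ℝ, wdil b j k l x * (starRingEnd ℂ) (wdil b j' k' l' x)) = 0 ↔
      ¬(((b:ℤ) ^ (j - j').toNat * l ≤ l' ∧ l' < (b:ℤ) ^ (j - j').toNat * (l + 1)) ∧
        k / b ^ (j - j').toNat = k') := by
  set m := (j - j').toNat with hmdef
  set c : ℤ := l' - (b:ℤ) ^ m * l with hcdef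
  have hB0 : (0:ℝ) < (b:ℝ) := by positivity
  have hBne : (b:ℝ) ≠ 0 := ne_of_gt hB0
  have hm : j = j' + (m:ℤ) := by
    rw [hmdef, Int.toNat_of_nonneg (sub_nonneg.mpr hjj)]; ring
  have hbm0 : (0:ℕ) < b ^ m := by positivity
  set β : ℝ := (b:ℝ) ^ m with hβdef
  have hβ0 : (0:ℝ) < β := by positivity
  have hβne : β ≠ 0 := ne_of_gt hβ0
  -- condition rewriting
  have hcond : (((b:ℤ) ^ m * l ≤ l' ∧ l' < (b:ℤ) ^ m * (l + 1)) ∧ k / b ^ m = k') ↔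
      ((0 ≤ c ∧ c < (b:ℤ)^m) ∧ k / b ^ m = k') := by
    have hx : (b:ℤ)^m * (l+1) = (b:ℤ)^m * l + (b:ℤ)^m := by ring
    constructor
    · rintro ⟨⟨h1, h2⟩, h3⟩
      exact ⟨⟨by omega, by omega⟩, h3⟩
    · rintro ⟨⟨h1, h2⟩, h3⟩
      exact ⟨⟨by omega, by omega⟩, h3⟩
  -- step 1: change of variables x = B^j y + B^j l
  set F : ℝ → ℂ := fun x => wdil b j k l x * (starRingEnd ℂ) (wdil b j' k' l' x) with hFdef
  set J : ℂ := ∫ y : ℝ, wal b k y * (starRingEnd ℂ) (wal b k' (β * y - (c:ℝ))) with hJdef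
  have hinv : (b:ℝ)^(-j) * (b:ℝ)^j = 1 := by
    rw [← zpow_add₀ hBne]; simp
  have hpw : (b:ℝ)^(-j') * (b:ℝ)^j = β := by
    rw [← zpow_add₀ hBne, hβdef]
    have : -j' + j = (m:ℤ) := by omega
    rw [this, zpow_natCast]
  set C : ℂ := (((b:ℝ) ^ (-(j:ℝ)/2) : ℝ) : ℂ) * (((b:ℝ) ^ (-(j':ℝ)/2) : ℝ) : ℂ) with hCdef
  have hC0 : C ≠ 0 := by
    apply mul_ne_zero <;>
      exact Complex.ofReal_ne_zero.mpr (ne_of_gt (Real.rpow_pos_of_pos hB0 _))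
  have hptF : ∀ y : ℝ, F ((b:ℝ)^j * y + (b:ℝ)^j * (l:ℝ)) =
      C * (wal b k y * (starRingEnd ℂ) (wal b k' (β * y - (c:ℝ)))) := by
    intro y
    rw [hFdef]
    simp only [wdil]
    have harg1 : (b:ℝ)^(-j) * ((b:ℝ)^j * y + (b:ℝ)^j * (l:ℝ)) - (l:ℝ) = y := by
      rw [mul_add, ← mul_assoc, ← mul_assoc, hinv, one_mul, one_mul]
      ring
    have harg2 : (b:ℝ)^(-j') * ((b:ℝ)^j * y + (b:ℝ)^j * (l:ℝ)) - (l':ℝ) = β * y - (c:ℝ) := by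
      rw [mul_add, ← mul_assoc, ← mul_assoc, hpw, hcdef]
      push_cast
      ring
    rw [harg1, harg2, map_mul, Complex.conj_ofReal, hCdef]
    ring
  have hsub : (∫ x : ℝ, F x) = |(b:ℝ)^j| • (C * J) := by
    have h1 : (∫ y : ℝ, F ((b:ℝ)^j * y + (b:ℝ)^j * (l:ℝ))) = |((b:ℝ)^j)⁻¹| • ∫ x : ℝ, F x := by
      calc (∫ y : ℝ, F ((b:ℝ)^j * y + (b:ℝ)^j * (l:ℝ)))
          = |((b:ℝ)^j)⁻¹| • ∫ x : ℝ, F (x + (b:ℝ)^j * (l:ℝ)) :=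
            Measure.integral_comp_mul_left (fun x => F (x + (b:ℝ)^j * (l:ℝ))) ((b:ℝ)^j)
        _ = |((b:ℝ)^j)⁻¹| • ∫ x : ℝ, F x := by rw [integral_add_right_eq_self]
    have h2 : (∫ y : ℝ, F ((b:ℝ)^j * y + (b:ℝ)^j * (l:ℝ))) = C * J := by
      calc (∫ y : ℝ, F ((b:ℝ)^j * y + (b:ℝ)^j * (l:ℝ)))
          = ∫ y : ℝ, C * (wal b k y * (starRingEnd ℂ) (wal b k' (β * y - (c:ℝ)))) := by
            congr 1; funext y; exact hptF y
        _ = C * J := by rw [integral_const_mul, hJdef]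
    have hBj0 : ((b:ℝ)^j) ≠ 0 := ne_of_gt (zpow_pos hB0 j)
    rw [← h2, h1, smul_smul, abs_inv, mul_inv_cancel₀ (by simpa using hBj0), one_smul]
  have hIiff : (∫ x : ℝ, F x) = 0 ↔ J = 0 := by
    rw [hsub, smul_eq_zero, mul_eq_zero]
    have hBj0 : |(b:ℝ)^j| ≠ 0 := by
      simp only [ne_eq, abs_eq_zero]
      exact ne_of_gt (zpow_pos hB0 j)
    constructor
    · rintro (h | h | h)
      · exact absurd h hBj0
      · exact absurd h hC0
      · exact h
    · intro h; exact Or.inr (Or.inr h)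
  rw [hIiff, hcond]
  by_cases hc : 0 ≤ c ∧ c < (b:ℤ)^m
  · obtain ⟨hc0, hclt⟩ := hc
    set n : ℕ := c.toNat with hndef
    have hnc : ((n:ℕ):ℤ) = c := Int.toNat_of_nonneg hc0
    have hnR : ((n:ℕ):ℝ) = (c:ℝ) := by exact_mod_cast congrArg (Int.cast : ℤ → ℝ) hnc
    have hnlt : n < b ^ m := by
      have : ((n:ℕ):ℤ) < ((b^m : ℕ):ℤ) := by rw [hnc]; push_cast; exact hclt
      exact_mod_cast this
    obtain ⟨φ, hφ0, hφ⟩ := wal_shift b hb m k n hnlt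
    set G : ℝ → ℂ := fun y => wal b k y * (starRingEnd ℂ) (wal b k' (β * y - (c:ℝ))) with hGdef
    have hGpt : ∀ z : ℝ, G (β⁻¹ * z + β⁻¹ * (n:ℝ)) =
        φ * (wal b (k / b ^ m) z * (starRingEnd ℂ) (wal b k' z)) := by
      intro z
      have e1 : β⁻¹ * z + β⁻¹ * (n:ℝ) = (z + (n:ℝ)) / β := by
        field_simp
      have e2 : β * (β⁻¹ * z + β⁻¹ * (n:ℝ)) - (c:ℝ) = z := by
        field_simp [hnR]
        linarith [hnR]
      rw [hGdef]
      simp only []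
      rw [e2, e1]
      by_cases hz : z ∈ Set.Ico (0:ℝ) 1
      · rw [hφ z hz]
        ring
      · rw [wal_of_not_mem b k' hz]
        simp
    have hK : (∫ z : ℝ, G (β⁻¹ * z + β⁻¹ * (n:ℝ))) = |β| • J := by
      calc (∫ z : ℝ, G (β⁻¹ * z + β⁻¹ * (n:ℝ)))
          = |β⁻¹⁻¹| • ∫ x : ℝ, G (x + β⁻¹ * (n:ℝ)) :=
            Measure.integral_comp_mul_left (fun x => G (x + β⁻¹ * (n:ℝ))) β⁻¹
        _ = |β| • ∫ x : ℝ, G x := by rw [integral_add_right_eq_self, inv_inv]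
        _ = |β| • J := by rw [hJdef, hGdef]
    have hK2 : (∫ z : ℝ, G (β⁻¹ * z + β⁻¹ * (n:ℝ))) =
        φ * (if k / b ^ m = k' then 1 else 0) := by
      calc (∫ z : ℝ, G (β⁻¹ * z + β⁻¹ * (n:ℝ)))
          = ∫ z : ℝ, φ * (wal b (k / b ^ m) z * (starRingEnd ℂ) (wal b k' z)) := by
            congr 1; funext z; exact hGpt z
        _ = φ * ∫ z : ℝ, wal b (k / b ^ m) z * (starRingEnd ℂ) (wal b k' z) :=
            integral_const_mul _ _
        _ = φ * (if k / b ^ m = k' then 1 else 0) := by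
            rw [walsh_orthonormal b hb (k / b ^ m) k']
    have hJval : |β| • J = φ * (if k / b ^ m = k' then 1 else 0) := by rw [← hK, hK2]
    have hβabs : |β| ≠ 0 := by simpa using hβne
    constructor
    · intro hJ0
      rintro ⟨-, h3⟩
      rw [hJ0, smul_zero] at hJval
      rw [if_pos h3, mul_one] at hJval
      exact hφ0 hJval.symm
    · intro hny
      have h3 : ¬ (k / b ^ m = k') := by
        intro h3
        exact hny ⟨⟨hc0, hclt⟩, h3⟩
      rw [if_neg h3, mul_zero] at hJval
      have := hJval
      rcases smul_eq_zero.mp this with h | h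
      · exact absurd h hβabs
      · exact h
  · -- supports disjoint
    have hJ0 : J = 0 := by
      rw [hJdef]
      have hzero : ∀ y : ℝ, wal b k y * (starRingEnd ℂ) (wal b k' (β * y - (c:ℝ))) = 0 := by
        intro y
        by_cases hy : y ∈ Set.Ico (0:ℝ) 1
        · have harg : β * y - (c:ℝ) ∉ Set.Ico (0:ℝ) 1 := by
            rcases not_and_or.mp hc with h1 | h2
            · push_neg at h1
              have hcle : (c:ℝ) ≤ -1 := by
                have : c ≤ -1 := by omega
                exact_mod_cast this
              intro hmem
              have : (1:ℝ) ≤ β * y - (c:ℝ) := by nlinarith [hy.1, hβ0.le]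
              linarith [hmem.2]
            · push_neg at h2
              have hcge : ((b:ℤ)^m : ℝ) ≤ (c:ℝ) := by exact_mod_cast h2
              have hβc : β ≤ (c:ℝ) := by
                rw [hβdef]; push_cast at hcge ⊢; linarith
              intro hmem
              have : β * y - (c:ℝ) < 0 := by nlinarith [hy.2, hβ0]
              linarith [hmem.1]
          rw [wal_of_not_mem b k' harg]
          simp
        · rw [wal_of_not_mem b k hy, zero_mul]
      calc (∫ y : ℝ, wal b k y * (starRingEnd ℂ) (wal b k' (β * y - (c:ℝ))))
          = ∫ _ : ℝ, (0:ℂ) := by congr 1; funext y; exact hzero y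
        _ = 0 := integral_zero _ _
    constructor
    · intro _
      rintro ⟨h1, -⟩
      exact hc h1
    · intro _
      exact hJ0

theorem stmt_0 (b : ℕ) (hb : 2 ≤ b) (j j' l l' : ℤ) (k k' : ℕ) :
    (∫ x : ℝ, wdil b j k l x * (starRingEnd ℂ) (wdil b j' k' l' x)) = 0 ↔
    Disjoint (tile b j k l) (tile b j' k' l') := by
  rcases le_total j' j with hjj | hjj
  · rw [integral_char b hb j j' l l' k k' hjj, tile_char b hb j j' l l' k k' hjj]
  · have hsym : (∫ x : ℝ, wdil b j k l x * (starRingEnd ℂ) (wdil b j' k' l' x)) =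
        (starRingEnd ℂ) (∫ x : ℝ, wdil b j' k' l' x * (starRingEnd ℂ) (wdil b j k l x)) := by
      rw [← integral_conj]
      congr 1
      funext x
      rw [map_mul, Complex.conj_conj, mul_comm]
    rw [hsym, map_eq_zero_iff _ (starRingEnd ℂ).injective,
      integral_char b hb j' j l' l k' k hjj, disjoint_comm,
      tile_char b hb j' j l' l k' k hjj]
end

section
/- If the tiles $T_{j,k,l}$ and $T_{j',k',l'}$ intersect and $j \le j'$, then $\int_{\mathbb{R}} w_{j,k,l}(x)\,\overline{w_{j',k',l'}(x)}\,dx = b^{(j-j')/2}\,\overline{\mathrm{wal}_{k'}(b^{j-j'}l - l')} \neq 0$. -/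
open MeasureTheory Complex
open scoped BigOperators Classical

private lemma coef_zero {b k i : ℕ} (hb : 2 ≤ b) (hik : k < i) : k / b ^ i % b = 0 := by
  have h1 : k < b ^ i :=
    lt_of_lt_of_le (Nat.lt_two_pow_self)
      (le_trans (Nat.pow_le_pow_right (by norm_num) hik.le) (Nat.pow_le_pow_left hb i))
  rw [Nat.div_eq_of_lt h1, Nat.zero_mod]

private lemma coef_high {b k' : ℕ} (m i : ℕ) :
    k' / b ^ (m + i) % b = (k' / b ^ m) / b ^ i % b := by
  rw [Nat.div_div_eq_div_mul, ← pow_add]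

private lemma sum_ext_coef {b k' : ℕ} (hb : 2 ≤ b) (n : ℕ) (h : k' < n) (f : ℕ → ℂ) :
    ∑ i ∈ Finset.range (k'+1), ((k' / b ^ i % b : ℕ) : ℂ) * f i
      = ∑ i ∈ Finset.range n, ((k' / b ^ i % b : ℕ) : ℂ) * f i := by
  apply Finset.sum_subset (Finset.range_subset_range.2 (by omega))
  intro i _ hi
  rw [Finset.mem_range] at hi
  rw [coef_zero hb (by omega)]
  simp

private lemma floor_add_div (b r e : ℕ) (hb : 0 < b) {y : ℝ} (hy0 : 0 ≤ y) (hy1 : y < 1) :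
    ⌊((r:ℝ) + y) / (b:ℝ)^e⌋ = (r / b^e : ℕ) := by
  have hc : 0 < b ^ e := Nat.pow_pos hb
  have hcR : (0:ℝ) < (b:ℝ)^e := by positivity
  have h1 : (r / b^e) * b^e ≤ r := Nat.div_mul_le_self r (b^e)
  have h2 : r < (r / b^e + 1) * b^e := by
    calc r = b^e * (r / b^e) + r % b^e := (Nat.div_add_mod r (b^e)).symm
      _ < b^e * (r / b^e) + b^e := by
          exact Nat.add_lt_add_left (Nat.mod_lt r hc) _
      _ = (r / b^e + 1) * b^e := by ring
  have h1R : ((r / b^e : ℕ) : ℝ) * (b:ℝ)^e ≤ (r:ℝ) := by exact_mod_cast h1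
  have h2R : (r:ℝ) < (((r / b^e : ℕ) : ℝ) + 1) * (b:ℝ)^e := by exact_mod_cast h2
  have h2' : r + 1 ≤ (r / b^e + 1) * b^e := h2
  have h2R : (r:ℝ) + 1 ≤ (((r / b^e : ℕ) : ℝ) + 1) * (b:ℝ)^e := by exact_mod_cast h2'
  rw [Int.floor_eq_iff, Int.cast_natCast]
  constructor
  · rw [le_div_iff₀ hcR]
    linarith
  · rw [div_lt_iff₀ hcR]
    linarith

private lemma floor_add_mul (b r e : ℕ) (y : ℝ) :
    ⌊((r:ℝ) + y) * (b:ℝ)^e⌋ = (r * b^e : ℕ) + ⌊y * (b:ℝ)^e⌋ := by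
  have h : ((r:ℝ) + y) * (b:ℝ)^e = ((r * b^e : ℕ) : ℝ) + y * (b:ℝ)^e := by push_cast; ring
  rw [h, Int.floor_natCast_add]

private lemma wal_eq_zero {b k : ℕ} {x : ℝ} (hx : x ∉ Set.Ico (0:ℝ) 1) : wal b k x = 0 := by
  rw [wal, if_neg hx]

private lemma wal_ne_zero {b k : ℕ} {x : ℝ} (hx : x ∈ Set.Ico (0:ℝ) 1) : wal b k x ≠ 0 := by
  rw [wal, if_pos hx]; exact Complex.exp_ne_zero _

private lemma conj_wal_mul {b k : ℕ} {x : ℝ} (hx : x ∈ Set.Ico (0:ℝ) 1) :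
    wal b k x * (starRingEnd ℂ) (wal b k x) = 1 := by
  rw [wal, if_pos hx, ← Complex.exp_conj, ← Complex.exp_add]
  rw [show (starRingEnd ℂ) (2 * ↑Real.pi * Complex.I / ↑b *
      (∑ i ∈ Finset.range (k+1), ((k / b ^ i % b : ℕ) : ℂ) * ((⌊x * (b:ℝ) ^ (i+1)⌋ % (b:ℤ) : ℤ) : ℂ)))
      = -(2 * ↑Real.pi * Complex.I / ↑b *
      (∑ i ∈ Finset.range (k+1), ((k / b ^ i % b : ℕ) : ℂ) * ((⌊x * (b:ℝ) ^ (i+1)⌋ % (b:ℤ) : ℤ) : ℂ)))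
      from ?_]
  · rw [add_neg_cancel, Complex.exp_zero]
  · rw [map_mul]
    have h1 : (starRingEnd ℂ) (2 * ↑Real.pi * Complex.I / ↑b)
        = -(2 * ↑Real.pi * Complex.I / ↑b) := by
      rw [map_div₀, map_mul, map_mul]
      simp [Complex.conj_ofReal, Complex.conj_I, map_ofNat]
      ring
    have h2 : (starRingEnd ℂ)
        (∑ i ∈ Finset.range (k+1), ((k / b ^ i % b : ℕ) : ℂ) * ((⌊x * (b:ℝ) ^ (i+1)⌋ % (b:ℤ) : ℤ) : ℂ))
        = ∑ i ∈ Finset.range (k+1), ((k / b ^ i % b : ℕ) : ℂ) * ((⌊x * (b:ℝ) ^ (i+1)⌋ % (b:ℤ) : ℤ) : ℂ) := by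
      rw [map_sum]
      refine Finset.sum_congr rfl fun i _ => ?_
      rw [map_mul, map_natCast, map_intCast]
    rw [h1, h2, neg_mul]

private lemma wal_split {b : ℕ} (hb : 2 ≤ b) (m r k' : ℕ) (hr : r < b ^ m)
    {y : ℝ} (hy : y ∈ Set.Ico (0:ℝ) 1) :
    wal b k' (((r : ℝ) + y) / (b:ℝ) ^ m) =
      wal b k' ((r : ℝ) / (b:ℝ) ^ m) * wal b (k' / b ^ m) y := by
  obtain ⟨hy0, hy1⟩ := hy
  have hb0N : 0 < b := by omega
  have hb0 : (0:ℝ) < b := by exact_mod_cast hb0N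
  have hbm0 : (0:ℝ) < (b:ℝ)^m := by positivity
  have hrR : (r:ℝ) < (b:ℝ)^m := by exact_mod_cast hr
  have hr1 : (r:ℝ) + 1 ≤ (b:ℝ)^m := by exact_mod_cast hr
  have hmem1 : ((r:ℝ) + y) / (b:ℝ)^m ∈ Set.Ico (0:ℝ) 1 :=
    ⟨by positivity, by rw [div_lt_one hbm0]; linarith⟩
  have hmem2 : (r:ℝ) / (b:ℝ)^m ∈ Set.Ico (0:ℝ) 1 :=
    ⟨by positivity, by rw [div_lt_one hbm0]; exact hrR⟩
  rw [wal, wal, wal, if_pos hmem1, if_pos hmem2, if_pos ⟨hy0, hy1⟩, ← Complex.exp_add, ← mul_add]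
  congr 1
  congr 1
  -- now: S1 = S2 + S3
  have hKlt : k' / b ^ m < k' + 1 := Nat.lt_succ_of_le (Nat.div_le_self _ _)
  rw [sum_ext_coef hb (m + (k'+1)) (by omega)
      (fun i => ((⌊(((r:ℝ)+y)/(b:ℝ)^m) * (b:ℝ)^(i+1)⌋ % (b:ℤ) : ℤ) : ℂ)),
    sum_ext_coef hb (m + (k'+1)) (by omega)
      (fun i => ((⌊((r:ℝ)/(b:ℝ)^m) * (b:ℝ)^(i+1)⌋ % (b:ℤ) : ℤ) : ℂ)),
    sum_ext_coef hb (k'+1) hKlt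
      (fun i => ((⌊y * (b:ℝ)^(i+1)⌋ % (b:ℤ) : ℤ) : ℂ)),
    Finset.sum_range_add (fun i => ((k' / b ^ i % b : ℕ) : ℂ) *
      ((⌊(((r:ℝ)+y)/(b:ℝ)^m) * (b:ℝ)^(i+1)⌋ % (b:ℤ) : ℤ) : ℂ)) m (k'+1),
    Finset.sum_range_add (fun i => ((k' / b ^ i % b : ℕ) : ℂ) *
      ((⌊((r:ℝ)/(b:ℝ)^m) * (b:ℝ)^(i+1)⌋ % (b:ℤ) : ℤ) : ℂ)) m (k'+1)]
  have hlow : ∀ i ∈ Finset.range m,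
      ((k' / b ^ i % b : ℕ) : ℂ) * ((⌊(((r:ℝ)+y)/(b:ℝ)^m) * (b:ℝ)^(i+1)⌋ % (b:ℤ) : ℤ) : ℂ)
      = ((k' / b ^ i % b : ℕ) : ℂ) * ((⌊((r:ℝ)/(b:ℝ)^m) * (b:ℝ)^(i+1)⌋ % (b:ℤ) : ℤ) : ℂ) := by
    intro i hi
    rw [Finset.mem_range] at hi
    have hpow : (b:ℝ)^m = (b:ℝ)^(m-(i+1)) * (b:ℝ)^(i+1) := by
      rw [← pow_add]; congr 1; omega
    have hbe0 : (0:ℝ) < (b:ℝ)^(m-(i+1)) := by positivity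
    have hbi0 : (0:ℝ) < (b:ℝ)^(i+1) := by positivity
    have ha1 : (((r:ℝ)+y)/(b:ℝ)^m) * (b:ℝ)^(i+1) = ((r:ℝ) + y) / (b:ℝ)^(m-(i+1)) := by
      rw [hpow]; field_simp
    have ha2 : ((r:ℝ)/(b:ℝ)^m) * (b:ℝ)^(i+1) = ((r:ℝ) + 0) / (b:ℝ)^(m-(i+1)) := by
      rw [hpow, add_zero]; field_simp
    rw [ha1, ha2, floor_add_div b r (m-(i+1)) hb0N hy0 hy1,
      floor_add_div b r (m-(i+1)) hb0N le_rfl one_pos]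
  have hhigh : ∀ i ∈ Finset.range (k'+1),
      ((k' / b ^ (m+i) % b : ℕ) : ℂ) * ((⌊(((r:ℝ)+y)/(b:ℝ)^m) * (b:ℝ)^(m+i+1)⌋ % (b:ℤ) : ℤ) : ℂ)
      = (((k' / b ^ m) / b ^ i % b : ℕ) : ℂ) * ((⌊y * (b:ℝ)^(i+1)⌋ % (b:ℤ) : ℤ) : ℂ) := by
    intro i _
    rw [coef_high m i]
    have ha1 : (((r:ℝ)+y)/(b:ℝ)^m) * (b:ℝ)^(m+i+1) = ((r:ℝ) + y) * (b:ℝ)^(i+1) := by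
      rw [show m+i+1 = m+(i+1) from by omega, pow_add]; field_simp
    rw [ha1, floor_add_mul b r (i+1) y]
    congr 2
    rw [show ((r * b^(i+1) : ℕ) : ℤ) + ⌊y * (b:ℝ)^(i+1)⌋
        = ⌊y * (b:ℝ)^(i+1)⌋ + ((r * b^i : ℕ) : ℤ) * (b:ℤ) from by push_cast; ring,
      Int.add_mul_emod_self_right]
  have hhigh0 : ∀ i ∈ Finset.range (k'+1),
      ((k' / b ^ (m+i) % b : ℕ) : ℂ) * ((⌊((r:ℝ)/(b:ℝ)^m) * (b:ℝ)^(m+i+1)⌋ % (b:ℤ) : ℤ) : ℂ)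
      = 0 := by
    intro i _
    have ha1 : ((r:ℝ)/(b:ℝ)^m) * (b:ℝ)^(m+i+1) = ((r:ℝ) + 0) * (b:ℝ)^(i+1) := by
      rw [show m+i+1 = m+(i+1) from by omega, pow_add, add_zero]; field_simp
    rw [ha1, floor_add_mul b r (i+1) 0]
    rw [show (⌊(0:ℝ) * (b:ℝ)^(i+1)⌋ : ℤ) = 0 from by simp]
    rw [show ((r * b^(i+1) : ℕ) : ℤ) + 0 = ((r * b^i : ℕ) : ℤ) * (b:ℤ) from by push_cast; ring,
      Int.mul_emod_left]
    simp
  rw [Finset.sum_congr rfl hlow, Finset.sum_congr rfl hhigh,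
    Finset.sum_congr rfl hhigh0]
  simp

theorem stmt_1 (b : ℕ) (hb : 2 ≤ b) (j j' l l' : ℤ) (k k' : ℕ)
    (hle : j ≤ j') (hmeet : (tile b j k l ∩ tile b j' k' l').Nonempty) :
    (∫ x : ℝ, wdil b j k l x * (starRingEnd ℂ) (wdil b j' k' l' x)) =
      (((b:ℝ) ^ (((j:ℝ) - (j':ℝ))/2) : ℝ) : ℂ) *
        (starRingEnd ℂ) (wal b k' ((b:ℝ) ^ (j - j') * (l:ℝ) - (l':ℝ))) ∧
    (∫ x : ℝ, wdil b j k l x * (starRingEnd ℂ) (wdil b j' k' l' x)) ≠ 0 := by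
  have hb0N : 0 < b := by omega
  have hb0 : (0:ℝ) < b := by exact_mod_cast hb0N
  have hbne : (b:ℝ) ≠ 0 := ne_of_gt hb0
  obtain ⟨⟨s, t⟩, hp1, hp2⟩ := hmeet
  simp only [tile, Set.mem_prod, Set.mem_Ico] at hp1 hp2
  obtain ⟨⟨hs1, hs2⟩, ht1, ht2⟩ := hp1
  obtain ⟨⟨hs3, hs4⟩, ht3, ht4⟩ := hp2
  set m : ℕ := (j' - j).toNat with hmdef
  have hm : (m : ℤ) = j' - j := Int.toNat_of_nonneg (by omega)
  have hsplit : (b:ℝ)^j' = (b:ℝ)^j * (b:ℝ)^m := by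
    rw [← zpow_natCast (b:ℝ) m, ← zpow_add₀ hbne]; congr 1; omega
  have hsplit' : (b:ℝ)^(-j) = (b:ℝ)^(-j') * (b:ℝ)^m := by
    rw [← zpow_natCast (b:ℝ) m, ← zpow_add₀ hbne]; congr 1; omega
  have hjpos : (0:ℝ) < (b:ℝ)^j := zpow_pos hb0 j
  have hj'pos : (0:ℝ) < (b:ℝ)^(-j') := zpow_pos hb0 _
  -- time inequalities
  rw [hsplit] at hs3 hs4
  have hl1 : (b:ℝ)^m * (l':ℝ) < (l:ℝ) + 1 := by
    have h3 : (b:ℝ)^j * ((b:ℝ)^m * (l':ℝ)) < (b:ℝ)^j * ((l:ℝ)+1) := by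
      rw [← mul_assoc]; exact lt_of_le_of_lt hs3 hs2
    exact (mul_lt_mul_iff_right₀ hjpos).1 h3
  have hl2 : (l:ℝ) < (b:ℝ)^m * ((l':ℝ)+1) := by
    have h3 : (b:ℝ)^j * (l:ℝ) < (b:ℝ)^j * ((b:ℝ)^m * ((l':ℝ)+1)) := by
      rw [← mul_assoc]; exact lt_of_le_of_lt hs1 hs4
    exact (mul_lt_mul_iff_right₀ hjpos).1 h3
  have hlA : (b:ℤ)^m * l' ≤ l := by
    have h : ((b:ℤ)^m * l' : ℤ) < l + 1 := by exact_mod_cast hl1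
    omega
  have hlB : l < (b:ℤ)^m * (l' + 1) := by exact_mod_cast hl2
  -- frequency inequalities
  rw [hsplit'] at ht1 ht2
  have hk1 : (b:ℝ)^m * (k:ℝ) < (k':ℝ) + 1 := by
    have h3 : (b:ℝ)^(-j') * ((b:ℝ)^m * (k:ℝ)) < (b:ℝ)^(-j') * ((k':ℝ)+1) := by
      rw [← mul_assoc]; exact lt_of_le_of_lt ht1 ht4
    exact (mul_lt_mul_iff_right₀ hj'pos).1 h3
  have hk2 : (k':ℝ) < (b:ℝ)^m * ((k:ℝ)+1) := by
    have h3 : (b:ℝ)^(-j') * (k':ℝ) < (b:ℝ)^(-j') * ((b:ℝ)^m * ((k:ℝ)+1)) := by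
      rw [← mul_assoc]; exact lt_of_le_of_lt ht3 ht2
    exact (mul_lt_mul_iff_right₀ hj'pos).1 h3
  have hkA : b^m * k ≤ k' := by
    have h : (b^m * k : ℕ) < k' + 1 := by exact_mod_cast hk1
    omega
  have hkB : k' < b^m * (k + 1) := by exact_mod_cast hk2
  have hk : k' / b ^ m = k := Nat.div_eq_of_lt_le (by rw [mul_comm]; exact hkA) (by
    calc k' < b^m * (k+1) := hkB
    _ = (k+1) * b^m := by ring)
  -- r
  set r : ℕ := (l - (b:ℤ)^m * l').toNat with hrdef
  have hrz : (r : ℤ) = l - (b:ℤ)^m * l' := Int.toNat_of_nonneg (by omega)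
  have hrlt : r < b ^ m := by
    have h : (r:ℤ) < (b:ℤ)^m := by
      rw [hrz]
      have : (b:ℤ)^m * (l' + 1) = (b:ℤ)^m * l' + (b:ℤ)^m := by ring
      omega
    exact_mod_cast h
  have hrR : (r:ℝ) = (l:ℝ) - (b:ℝ)^m * (l':ℝ) := by
    have := congrArg (fun z : ℤ => (z:ℝ)) hrz
    push_cast at this
    exact this
  have hrRlt : (r:ℝ) < (b:ℝ)^m := by exact_mod_cast hrlt
  have hbm0 : (0:ℝ) < (b:ℝ)^m := by positivity
  set z0 : ℝ := (r:ℝ) / (b:ℝ)^m with hz0def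
  have hz0mem : z0 ∈ Set.Ico (0:ℝ) 1 := ⟨by positivity, by rw [hz0def, div_lt_one hbm0]; exact hrRlt⟩
  have harg : (b:ℝ) ^ (j - j') * (l:ℝ) - (l':ℝ) = z0 := by
    rw [show j - j' = -(m:ℤ) from by omega, zpow_neg, zpow_natCast, hz0def, hrR]
    field_simp
  -- pointwise rewrite of the integrand
  have hpoint : ∀ x : ℝ, wdil b j k l x * (starRingEnd ℂ) (wdil b j' k' l' x)
      = (((b:ℝ)^(-(j:ℝ)/2) * (b:ℝ)^(-(j':ℝ)/2) : ℝ) : ℂ) *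
        (wal b k ((b:ℝ)^(-j) * x - (l:ℝ)) *
          (starRingEnd ℂ) (wal b k' (((r:ℝ) + ((b:ℝ)^(-j) * x - (l:ℝ))) / (b:ℝ)^m))) := by
    intro x
    have hargx : (b:ℝ)^(-j') * x - (l':ℝ) = ((r:ℝ) + ((b:ℝ)^(-j) * x - (l:ℝ))) / (b:ℝ)^m := by
      rw [hsplit', hrR]
      field_simp
      ring
    simp only [wdil, map_mul, Complex.conj_ofReal, hargx]
    set_option linter.unusedTactic false in
    push_cast
    ring
  -- the function of y is an indicator of a constant
  have hF0 : (fun y : ℝ => wal b k y * (starRingEnd ℂ) (wal b k' (((r:ℝ) + y) / (b:ℝ)^m)))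
      = Set.indicator (Set.Ico (0:ℝ) 1) (fun _ => (starRingEnd ℂ) (wal b k' z0)) := by
    funext y
    by_cases hy : y ∈ Set.Ico (0:ℝ) 1
    · rw [Set.indicator_of_mem hy]
      rw [wal_split hb m r k' hrlt hy, hk, map_mul]
      calc wal b k y * ((starRingEnd ℂ) (wal b k' z0) * (starRingEnd ℂ) (wal b k y))
          = (starRingEnd ℂ) (wal b k' z0) * (wal b k y * (starRingEnd ℂ) (wal b k y)) := by ring
        _ = (starRingEnd ℂ) (wal b k' z0) := by rw [conj_wal_mul hy, mul_one]
    · rw [Set.indicator_of_notMem hy, wal_eq_zero hy, zero_mul]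
  have hIntF : (∫ y : ℝ, wal b k y * (starRingEnd ℂ) (wal b k' (((r:ℝ) + y) / (b:ℝ)^m)))
      = (starRingEnd ℂ) (wal b k' z0) := by
    rw [hF0, MeasureTheory.integral_indicator measurableSet_Ico,
      MeasureTheory.setIntegral_const]
    simp [Real.volume_Ico]
  have hcomp : (∫ x : ℝ, wal b k ((b:ℝ)^(-j) * x - (l:ℝ)) *
        (starRingEnd ℂ) (wal b k' (((r:ℝ) + ((b:ℝ)^(-j) * x - (l:ℝ))) / (b:ℝ)^m)))
      = |((b:ℝ)^(-j))⁻¹| • ∫ y : ℝ, wal b k (y - (l:ℝ)) *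
        (starRingEnd ℂ) (wal b k' (((r:ℝ) + (y - (l:ℝ))) / (b:ℝ)^m)) :=
    MeasureTheory.Measure.integral_comp_mul_left
      (fun u : ℝ => wal b k (u - (l:ℝ)) *
        (starRingEnd ℂ) (wal b k' (((r:ℝ) + (u - (l:ℝ))) / (b:ℝ)^m))) ((b:ℝ)^(-j))
  have hshift : (∫ y : ℝ, wal b k (y - (l:ℝ)) *
        (starRingEnd ℂ) (wal b k' (((r:ℝ) + (y - (l:ℝ))) / (b:ℝ)^m)))
      = ∫ y : ℝ, wal b k y * (starRingEnd ℂ) (wal b k' (((r:ℝ) + y) / (b:ℝ)^m)) :=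
    MeasureTheory.integral_sub_right_eq_self (μ := volume)
      (fun u : ℝ => wal b k u * (starRingEnd ℂ) (wal b k' (((r:ℝ) + u) / (b:ℝ)^m))) (l:ℝ)
  have habs : |((b:ℝ)^(-j))⁻¹| = (b:ℝ)^(j:ℤ) := by
    rw [← zpow_neg, neg_neg, abs_of_pos hjpos]
  have hcoef : ((b:ℝ)^(-(j:ℝ)/2) * (b:ℝ)^(-(j':ℝ)/2)) * (b:ℝ)^(j:ℤ)
      = (b:ℝ)^(((j:ℝ)-(j':ℝ))/2) := by
    rw [← Real.rpow_intCast (b:ℝ) j, ← Real.rpow_add hb0, ← Real.rpow_add hb0]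
    congr 1
    push_cast
    ring
  have hval : (∫ x : ℝ, wdil b j k l x * (starRingEnd ℂ) (wdil b j' k' l' x)) =
      (((b:ℝ) ^ (((j:ℝ) - (j':ℝ))/2) : ℝ) : ℂ) *
        (starRingEnd ℂ) (wal b k' ((b:ℝ) ^ (j - j') * (l:ℝ) - (l':ℝ))) := by
    rw [harg]
    simp_rw [hpoint]
    rw [MeasureTheory.integral_const_mul, hcomp, hshift, hIntF, habs, Complex.real_smul,
      ← mul_assoc, ← Complex.ofReal_mul, hcoef]
  refine ⟨hval, ?_⟩
  rw [hval]
  apply mul_ne_zero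
  · rw [ne_eq, Complex.ofReal_eq_zero]
    exact (Real.rpow_pos_of_pos hb0 _).ne'
  · rw [ne_eq, map_eq_zero, harg]
    exact wal_ne_zero hz0mem
end

section
/- Let $j,k,l$ be integers with $k \ge 0$ and $b \mid l$. Then the linear span of $\{w_{j,k,l}, w_{j,k,l+1}, \ldots, w_{j,k,l+b-1}\}$ equals the linear span of $\{w_{j+1,kb,l/b}, w_{j+1,kb+1,l/b}, \ldots, w_{j+1,kb+b-1,l/b}\}$ in $L_2(\mathbb{R})$. -/
open MeasureTheory Complex
open scoped BigOperators Classical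

noncomputable def Sw (b k : ℕ) (x : ℝ) : ℤ :=
  ∑ i ∈ Finset.range (k+1), ((k / b ^ i % b : ℕ) : ℤ) * (⌊x * (b:ℝ) ^ (i+1)⌋ % (b:ℤ))

lemma wal_eq (b k : ℕ) (x : ℝ) :
    wal b k x = if x ∈ Set.Ico (0:ℝ) 1 then
      Complex.exp (2 * Real.pi * Complex.I / b * ((Sw b k x : ℤ) : ℂ)) else 0 := by
  unfold wal Sw
  simp only [Int.cast_sum, Int.cast_mul, Int.cast_natCast]

lemma digit_zero (b k : ℕ) (hb : 2 ≤ b) {i : ℕ} (hi : k + 1 ≤ i) :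
    k / b ^ i = 0 := by
  apply Nat.div_eq_of_lt
  calc k < 2 ^ k := Nat.lt_two_pow_self
  _ ≤ 2 ^ i := Nat.pow_le_pow_right (by norm_num) (by omega)
  _ ≤ b ^ i := Nat.pow_le_pow_left hb i

lemma Sw_rec (b k r : ℕ) (hb : 2 ≤ b) (hr : r < b) (y : ℝ) (hy : y ∈ Set.Ico (0:ℝ) 1) :
    Sw b (k*b+r) y
      = r * ⌊y * (b:ℝ)⌋ + Sw b k ((b:ℝ)*y - ((⌊y * (b:ℝ)⌋ : ℤ) : ℝ)) := by
  have hb0 : (0:ℕ) < b := by omega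
  have hbR : (0:ℝ) < b := by exact_mod_cast hb0
  set i0 : ℤ := ⌊y * (b:ℝ)⌋ with hi0
  set z : ℝ := (b:ℝ)*y - (i0 : ℝ) with hz
  have h0le : 0 ≤ i0 := Int.floor_nonneg.2 (mul_nonneg hy.1 hbR.le)
  have hlt : i0 < (b:ℤ) := by
    apply Int.floor_lt.2
    push_cast
    nlinarith [hy.2]
  have hfl : ∀ i : ℕ, ⌊y * (b:ℝ)^(i+2)⌋ = i0 * (b:ℤ)^(i+1) + ⌊z * (b:ℝ)^(i+1)⌋ := by
    intro i
    have h1 : z * (b:ℝ)^(i+1) = y * (b:ℝ)^(i+2) - ((i0 * (b:ℤ)^(i+1) : ℤ) : ℝ) := by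
      push_cast; ring
    rw [h1, Int.floor_sub_intCast]; ring
  have hterm : ∀ i : ℕ,
      (((k*b+r) / b ^ (i+1) % b : ℕ) : ℤ) * (⌊y * (b:ℝ) ^ ((i+1)+1)⌋ % (b:ℤ))
        = ((k / b ^ i % b : ℕ) : ℤ) * (⌊z * (b:ℝ) ^ (i+1)⌋ % (b:ℤ)) := by
    intro i
    have hd : (k*b+r) / b ^ (i+1) = k / b ^ i := by
      have h2 : b ^ (i+1) = b * b ^ i := by ring
      rw [h2, ← Nat.div_div_eq_div_mul, mul_comm k b, Nat.mul_add_div hb0,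
        Nat.div_eq_of_lt hr, Nat.add_zero]
    have h3 : (i+1)+1 = i+2 := rfl
    rw [hd, h3, hfl i]
    congr 1
    conv_lhs => rw [show i0 * (b:ℤ)^(i+1) + ⌊z * (b:ℝ)^(i+1)⌋
      = ⌊z * (b:ℝ)^(i+1)⌋ + (b:ℤ) * (i0 * (b:ℤ)^i) by ring]
    simp [Int.add_mul_emod_self_left]
  have h00 : (((k*b+r) / b ^ 0 % b : ℕ) : ℤ) * (⌊y * (b:ℝ) ^ (0+1)⌋ % (b:ℤ))
      = (r : ℤ) * i0 := by
    rw [pow_zero, Nat.div_one, mul_comm k b, Nat.mul_add_mod, Nat.mod_eq_of_lt hr]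
    rw [pow_one, ← hi0, Int.emod_eq_of_lt h0le hlt]
  unfold Sw
  rw [Finset.sum_range_succ', h00]
  have hsum : (∑ i ∈ Finset.range (k*b+r),
      (((k*b+r) / b ^ (i+1) % b : ℕ) : ℤ) * (⌊y * (b:ℝ) ^ ((i+1)+1)⌋ % (b:ℤ)))
      = ∑ i ∈ Finset.range (k+1),
      ((k / b ^ i % b : ℕ) : ℤ) * (⌊z * (b:ℝ) ^ (i+1)⌋ % (b:ℤ)) := by
    rw [Finset.sum_congr rfl (fun i _ => hterm i)]
    set g : ℕ → ℤ := fun i => ((k / b ^ i % b : ℕ) : ℤ) * (⌊z * (b:ℝ) ^ (i+1)⌋ % (b:ℤ))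
      with hg
    have hzero : ∀ i, k + 1 ≤ i → g i = 0 := by
      intro i hi
      show ((k / b ^ i % b : ℕ) : ℤ) * _ = 0
      rw [digit_zero b k hb hi]
      simp
    have hzero2 : ∀ i, k*b+r ≤ i → g i = 0 := by
      intro i hi
      rcases Nat.eq_zero_or_pos k with hk | hk
      · simp [hg, hk]
      · exact hzero i (by nlinarith)
    have e1 : ∑ i ∈ Finset.range (k*b+r), g i = ∑ i ∈ Finset.range (k*b+r+k+1), g i :=
      Finset.sum_subset (Finset.range_subset_range.2 (by omega))
        (fun i _ hi2 => hzero2 i (by simp [Finset.mem_range] at hi2; omega))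
    have e2 : ∑ i ∈ Finset.range (k+1), g i = ∑ i ∈ Finset.range (k*b+r+k+1), g i :=
      Finset.sum_subset (Finset.range_subset_range.2 (by omega))
        (fun i _ hi2 => hzero i (by simp [Finset.mem_range] at hi2; omega))
    rw [e1, e2]
  rw [hsum]; ring

lemma walsh_rec (b k r : ℕ) (hb : 2 ≤ b) (hr : r < b) (y : ℝ) :
    wal b (k*b+r) y = ∑ i ∈ Finset.range b,
      Complex.exp (2 * Real.pi * Complex.I / b * ((r:ℂ) * (i:ℕ))) * wal b k ((b:ℝ)*y - (i:ℕ)) := by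
  have hbR : (0:ℝ) < b := by positivity
  by_cases hy : y ∈ Set.Ico (0:ℝ) 1
  · set i0 : ℤ := ⌊y * (b:ℝ)⌋ with hi0
    have h0le : 0 ≤ i0 := Int.floor_nonneg.2 (mul_nonneg hy.1 hbR.le)
    have hlt : i0 < (b:ℤ) := by
      apply Int.floor_lt.2; push_cast; nlinarith [hy.2]
    have hfl1 : (i0:ℝ) ≤ y * b := Int.floor_le _
    have hfl2 : y * b < (i0:ℝ) + 1 := Int.lt_floor_add_one _
    rw [mul_comm y (b:ℝ)] at hfl1 hfl2
    set n0 : ℕ := i0.toNat with hn0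
    have hcast : (n0:ℤ) = i0 := Int.toNat_of_nonneg h0le
    have hcastR : (n0:ℝ) = (i0:ℝ) := by exact_mod_cast congrArg (Int.cast : ℤ → ℝ) hcast
    have hn0b : n0 < b := by omega
    have hzmem : (b:ℝ)*y - (n0:ℝ) ∈ Set.Ico (0:ℝ) 1 := by
      constructor
      · rw [hcastR]; nlinarith
      · rw [hcastR]; nlinarith
    rw [Finset.sum_eq_single n0]
    · rw [wal_eq, if_pos hy, wal_eq, if_pos hzmem, Sw_rec b k r hb hr y hy]
      rw [← hi0, ← hcast]
      push_cast
      rw [mul_add, Complex.exp_add]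
    · intro i hi hne
      have hiz : ((i:ℤ) ≠ i0) := by
        intro h; apply hne; omega
      have : (b:ℝ)*y - (i:ℕ) ∉ Set.Ico (0:ℝ) 1 := by
        intro hmem
        rcases lt_or_gt_of_ne hiz with h | h
        · have hA' : (i:ℤ) + 1 ≤ i0 := h
          have hA : ((i:ℕ):ℝ) + 1 ≤ (i0:ℝ) := by exact_mod_cast hA'
          linarith [hmem.2]
        · have hB' : i0 + 1 ≤ (i:ℤ) := h
          have hB : (i0:ℝ) + 1 ≤ ((i:ℕ):ℝ) := by exact_mod_cast hB'
          linarith [hmem.1]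
      rw [wal_eq, if_neg this, mul_zero]
    · intro h
      exact absurd (Finset.mem_range.2 hn0b) h
  · rw [wal_eq, if_neg hy]
    symm
    apply Finset.sum_eq_zero
    intro i hi
    have hib : i < b := Finset.mem_range.1 hi
    have : (b:ℝ)*y - (i:ℕ) ∉ Set.Ico (0:ℝ) 1 := by
      intro hmem
      apply hy
      rcases hmem with ⟨h1, h2⟩
      constructor
      · by_contra hneg
        push_neg at hneg
        have hi0 : (0:ℝ) ≤ (i:ℕ) := by positivity
        nlinarith
      · by_contra hge
        push_neg at hge
        have : ((i:ℕ):ℝ) + 1 ≤ (b:ℝ) := by exact_mod_cast hib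
        nlinarith
    rw [wal_eq, if_neg this, mul_zero]

lemma wdil_rec (b : ℕ) (hb : 2 ≤ b) (j m : ℤ) (k r : ℕ) (hr : r < b) (x : ℝ) :
    wdil b (j+1) (k*b+r) m x = (((b:ℝ) ^ (-(1:ℝ)/2) : ℝ) : ℂ) *
      ∑ i ∈ Finset.range b,
        Complex.exp (2 * Real.pi * Complex.I / b * ((r:ℂ) * (i:ℕ))) * wdil b j k (b*m + i) x := by
  have hbR : (0:ℝ) < b := by positivity
  have hbne : (b:ℝ) ≠ 0 := ne_of_gt hbR
  have h1 : (b:ℝ)^(-(j+1)) * (b:ℝ) = (b:ℝ)^(-j) := by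
    rw [show (-(j+1) : ℤ) = -j + (-1) by ring, zpow_add₀ hbne, zpow_neg_one]
    field_simp
  have harg : ∀ i : ℕ, (b:ℝ) * ((b:ℝ)^(-(j+1)) * x - (m:ℝ)) - (i:ℕ)
      = (b:ℝ)^(-j) * x - ((b*m+i : ℤ):ℝ) := by
    intro i
    push_cast
    rw [← h1]
    ring
  have hsc : ((b:ℝ) ^ (-((j:ℝ)+1)/2) : ℝ)
      = (b:ℝ) ^ (-(j:ℝ)/2) * (b:ℝ) ^ (-(1:ℝ)/2) := by
    rw [← Real.rpow_add hbR]
    ring_nf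
  unfold wdil
  rw [walsh_rec b k r hb hr]
  push_cast
  rw [hsc, Finset.mul_sum, Finset.mul_sum]
  apply Finset.sum_congr rfl
  intro i _
  rw [harg i]
  push_cast
  ring

lemma orth (b : ℕ) (hb : 2 ≤ b) (i i' : ℕ) (hi : i < b) (hi' : i' < b) :
    ∑ r ∈ Finset.range b, (Complex.exp (2 * Real.pi * Complex.I / b * ((i:ℂ) - (i':ℂ))))^r
      = if i = i' then (b:ℂ) else 0 := by
  have hbC : (b:ℂ) ≠ 0 := Nat.cast_ne_zero.2 (by omega)
  have hπ : ((Real.pi:ℂ)) ≠ 0 := Complex.ofReal_ne_zero.2 Real.pi_ne_zero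
  have hI := Complex.I_ne_zero
  by_cases h : i = i'
  · subst h
    simp
  · rw [if_neg h]
    set ζ : ℂ := Complex.exp (2 * Real.pi * Complex.I / b * ((i:ℂ) - (i':ℂ))) with hζ
    have hζb : ζ ^ b = 1 := by
      rw [hζ, ← Complex.exp_nat_mul]
      have hc : (b:ℂ) * (2 * Real.pi * Complex.I / b * ((i:ℂ) - (i':ℂ)))
          = (((i:ℤ) - (i':ℤ) : ℤ) : ℂ) * (2 * Real.pi * Complex.I) := by
        push_cast
        field_simp
      rw [hc, Complex.exp_int_mul_two_pi_mul_I]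
    have hζ1 : ζ ≠ 1 := by
      rw [hζ]
      intro hc
      rw [Complex.exp_eq_one_iff] at hc
      obtain ⟨n, hn⟩ := hc
      have habs : |(i:ℤ) - (i':ℤ)| < (b:ℤ) := by rw [abs_lt]; omega
      have h1 : ((i:ℤ) - (i':ℤ)) ≠ 0 := by omega
      have h2πI : (2 * (Real.pi:ℂ) * Complex.I) ≠ 0 := by
        intro hz
        simp [Complex.I_ne_zero, Complex.ofReal_ne_zero.2 Real.pi_ne_zero] at hz
      have hn2 : (i:ℂ) - (i':ℂ) = (n:ℂ) * b := by
        apply mul_left_cancel₀ h2πI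
        field_simp at hn
        rw [hn]; ring
      have hn3 : (i:ℤ) - (i':ℤ) = n * b := by exact_mod_cast hn2
      have hdd : ((i:ℤ) - (i':ℤ)) = (b:ℤ) * n := by rw [hn3]; ring
      exact h1 (Int.eq_zero_of_abs_lt_dvd ⟨n, hdd⟩ habs)
    rw [geom_sum_eq hζ1, hζb]
    simp

theorem stmt_2 (b : ℕ) (hb : 2 ≤ b) (j l : ℤ) (k : ℕ) (hl : (b:ℤ) ∣ l) :
    Submodule.span ℂ (Set.range fun i : Fin b => wdil b j k (l + (i:ℕ))) =
    Submodule.span ℂ (Set.range fun r : Fin b => wdil b (j+1) (k * b + (r:ℕ)) (l / b)) := by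
  have hbR : (0:ℝ) < b := by positivity
  have hbz : ((b:ℤ)) ≠ 0 := by exact_mod_cast (by omega : b ≠ 0)
  obtain ⟨m, rfl⟩ := hl
  have hdiv : ((b:ℤ) * m) / b = m := Int.mul_ediv_cancel_left m hbz
  rw [hdiv]
  set c : ℂ := (((b:ℝ) ^ (-(1:ℝ)/2) : ℝ) : ℂ) with hc
  have hcne : c ≠ 0 := by
    rw [hc]
    exact_mod_cast (Real.rpow_pos_of_pos hbR _).ne'
  have hbCne : (b:ℂ) ≠ 0 := Nat.cast_ne_zero.2 (by omega)
  -- forward identity at function level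
  have key : ∀ r : ℕ, r < b → wdil b (j+1) (k*b+r) m
      = c • ∑ i ∈ Finset.range b,
          Complex.exp (2 * Real.pi * Complex.I / b * ((r:ℂ) * (i:ℕ))) • wdil b j k ((b:ℤ)*m + i) := by
    intro r hr
    funext x
    rw [wdil_rec b hb j m k r hr x]
    simp only [Pi.smul_apply, Finset.sum_apply, smul_eq_mul]
    rfl
  -- inverse identity at function level
  have key2 : ∀ i' : Fin b,
      (∑ r ∈ Finset.range b,
        Complex.exp (-(2 * Real.pi * Complex.I / b) * ((r:ℂ) * ((i':ℕ):ℂ))) •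
          wdil b (j+1) (k*b+r) m)
        = ((b:ℂ) * c) • wdil b j k ((b:ℤ)*m + (i':ℕ)) := by
    intro i'
    funext x
    simp only [Finset.sum_apply, Pi.smul_apply, smul_eq_mul]
    calc ∑ r ∈ Finset.range b,
          Complex.exp (-(2 * Real.pi * Complex.I / b) * ((r:ℂ) * ((i':ℕ):ℂ))) *
            wdil b (j+1) (k*b+r) m x
        = ∑ r ∈ Finset.range b, ∑ i ∈ Finset.range b,
            c * ((Complex.exp (2 * Real.pi * Complex.I / b * ((i:ℂ) - ((i':ℕ):ℂ))))^r *
              wdil b j k ((b:ℤ)*m + i) x) := by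
          refine Finset.sum_congr rfl (fun r hr => ?_)
          rw [wdil_rec b hb j m k r (Finset.mem_range.1 hr) x, Finset.mul_sum, Finset.mul_sum]
          refine Finset.sum_congr rfl (fun i hi => ?_)
          have hζ : (Complex.exp (2 * Real.pi * Complex.I / b * ((i:ℂ) - ((i':ℕ):ℂ))))^r
              = Complex.exp (2 * Real.pi * Complex.I / b * ((r:ℂ) * (i:ℕ))) *
                Complex.exp (-(2 * Real.pi * Complex.I / b) * ((r:ℂ) * ((i':ℕ):ℂ))) := by
            rw [← Complex.exp_nat_mul, ← Complex.exp_add]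
            congr 1
            push_cast
            ring
          rw [hζ]
          ring
      _ = ∑ i ∈ Finset.range b, ∑ r ∈ Finset.range b,
            c * ((Complex.exp (2 * Real.pi * Complex.I / b * ((i:ℂ) - ((i':ℕ):ℂ))))^r *
              wdil b j k ((b:ℤ)*m + i) x) := Finset.sum_comm
      _ = ∑ i ∈ Finset.range b,
            c * ((∑ r ∈ Finset.range b,
              (Complex.exp (2 * Real.pi * Complex.I / b * ((i:ℂ) - ((i':ℕ):ℂ))))^r) *
              wdil b j k ((b:ℤ)*m + i) x) := by
          refine Finset.sum_congr rfl (fun i hi => ?_)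
          rw [Finset.sum_mul, Finset.mul_sum]
      _ = (b:ℂ) * c * wdil b j k ((b:ℤ)*m + (i':ℕ)) x := by
          rw [Finset.sum_congr rfl
            (fun i hi => by rw [orth b hb i i' (Finset.mem_range.1 hi) i'.2])]
          rw [Finset.sum_eq_single (i':ℕ)]
          · rw [if_pos rfl]; ring
          · intro i hi hne
            rw [if_neg hne]
            ring
          · intro hnotin
            exact absurd (Finset.mem_range.2 i'.2) hnotin
  apply le_antisymm
  · rw [Submodule.span_le]
    rintro _ ⟨i', rfl⟩
    have hmem : wdil b j k ((b:ℤ)*m + (i':ℕ))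
        = ((b:ℂ) * c)⁻¹ • ∑ r ∈ Finset.range b,
            Complex.exp (-(2 * Real.pi * Complex.I / b) * ((r:ℂ) * ((i':ℕ):ℂ))) •
              wdil b (j+1) (k*b+r) m := by
      rw [key2 i', smul_smul, inv_mul_cancel₀ (mul_ne_zero hbCne hcne), one_smul]
    beta_reduce
    rw [SetLike.mem_coe, hmem]
    refine Submodule.smul_mem _ _ (Submodule.sum_mem _ (fun r hr => Submodule.smul_mem _ _ ?_))
    exact Submodule.subset_span ⟨⟨r, Finset.mem_range.1 hr⟩, rfl⟩
  · rw [Submodule.span_le]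
    rintro _ ⟨r, rfl⟩
    beta_reduce
    rw [SetLike.mem_coe, key r r.2]
    refine Submodule.smul_mem _ _ (Submodule.sum_mem _ (fun i hi => Submodule.smul_mem _ _ ?_))
    exact Submodule.subset_span ⟨⟨i, Finset.mem_range.1 hi⟩, rfl⟩
end

section
/- With the weights $\lambda_n = b^{j_1+\cdots+j_s}/|N_{\bsj,\bsl}|$ for $n \in N_{\bsj,\bsl}$: (i) if $|N_{\bsj,\bsl}| > 0$ then $\delta_{\bsj,\mathbf{0},\bsl} = 0$; (ii) if $|N_{\bsj,\bsl}| = 0$ then $\delta_{\bsj,\mathbf{0},\bsl} = b^{(j_1+\cdots+j_s)/2}$; (iii) if $|N_{\bsj,\bsl}| = 0$ and $\bsr \neq \mathbf{0}$ then $\delta_{\bsj,\bsr,\bsl} = 0$. -/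
open MeasureTheory Complex
open scoped BigOperators Classical

/-- Tensor product Walsh function on `ℝ^s`. -/
noncomputable def wt (b : ℕ) {s : ℕ} (j : Fin s → ℤ) (k : Fin s → ℕ) (l : Fin s → ℤ)
    (x : Fin s → ℝ) : ℂ :=
  ∏ i, wdil b (j i) (k i) (l i) (x i)

/-- The box `[b^j ⋆ l, b^j ⋆ (l+1))` in `ℝ^s`. -/
def bigBox (b : ℕ) {s : ℕ} (j l : Fin s → ℤ) : Set (Fin s → ℝ) :=
  Set.univ.pi fun i => Set.Ico ((b:ℝ)^(j i) * (l i : ℝ)) ((b:ℝ)^(j i) * ((l i : ℝ) + 1))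

/-- The block of frequencies `⌊b^{r_i - 1}⌋ ≤ k_i < b^{r_i}`. -/
def blockF (b : ℕ) {s : ℕ} (r : Fin s → ℕ) : Finset (Fin s → ℕ) :=
  Fintype.piFinset fun i => Finset.Ico (b ^ (r i) / b) (b ^ (r i))

/-- The quadrature error quantity `δ_{j,r,l}`. -/
noncomputable def deltaQ (b : ℕ) {s : ℕ} (N : ℕ) (lam : ℕ → ℝ) (x : ℕ → Fin s → ℝ)
    (j : Fin s → ℤ) (r : Fin s → ℕ) (l : Fin s → ℤ) : ℝ :=
  Real.sqrt (∑ k ∈ blockF b r,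
    ‖(∑ n ∈ Finset.range N, (lam n : ℂ) * wt b j k l (x n)) -
      ∫ y : Fin s → ℝ, wt b j k l y‖ ^ 2)

lemma prod_rpow_sum {ι : Type*} (s : Finset ι) {c : ℝ} (hc : 0 < c) (f : ι → ℝ) :
    ∏ i ∈ s, c ^ f i = c ^ (∑ i ∈ s, f i) := by
  induction s using Finset.cons_induction with
  | empty => simp
  | cons a s ha ih => rw [Finset.prod_cons, Finset.sum_cons, ih, ← Real.rpow_add hc]

lemma shift_mem_iff {b : ℕ} (hbp : (0:ℝ) < b) (j l : ℤ) (x : ℝ) :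
    (b:ℝ)^(-j) * x - (l:ℝ) ∈ Set.Ico (0:ℝ) 1 ↔
      x ∈ Set.Ico ((b:ℝ)^j * (l:ℝ)) ((b:ℝ)^j * ((l:ℝ)+1)) := by
  have hc : (0:ℝ) < (b:ℝ)^j := zpow_pos hbp j
  rw [zpow_neg, inv_mul_eq_div, Set.mem_Ico, Set.mem_Ico, sub_nonneg, sub_lt_iff_lt_add,
    le_div_iff₀ hc, div_lt_iff₀ hc]
  constructor <;> rintro ⟨h1, h2⟩ <;> exact ⟨by nlinarith, by nlinarith⟩

lemma wal_zero_eq_s6 (b : ℕ) (x : ℝ) :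
    wal b 0 x = if x ∈ Set.Ico (0:ℝ) 1 then 1 else 0 := by
  unfold wal
  split <;> simp

lemma wdil_eq_zero {b : ℕ} (hbp : (0:ℝ) < b) {j l : ℤ} {k : ℕ} {x : ℝ}
    (hx : x ∉ Set.Ico ((b:ℝ)^j * (l:ℝ)) ((b:ℝ)^j * ((l:ℝ)+1))) :
    wdil b j k l x = 0 := by
  unfold wdil wal
  rw [if_neg, mul_zero]
  exact fun h => hx ((shift_mem_iff hbp j l x).1 h)

lemma wt_eq_zero {b : ℕ} (hbp : (0:ℝ) < b) {s : ℕ} {j l : Fin s → ℤ} {k : Fin s → ℕ}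
    {x : Fin s → ℝ} (hx : x ∉ bigBox b j l) : wt b j k l x = 0 := by
  rw [bigBox, Set.mem_univ_pi] at hx
  push_neg at hx
  obtain ⟨i, hi⟩ := hx
  exact Finset.prod_eq_zero (Finset.mem_univ i) (wdil_eq_zero hbp hi)

lemma blockF_zero {b : ℕ} (hb2 : 2 ≤ b) (s : ℕ) :
    blockF b (0 : Fin s → ℕ) = {0} := by
  ext k
  simp only [blockF, Fintype.mem_piFinset, Pi.zero_apply, pow_zero, Finset.mem_Ico,
    Finset.mem_singleton]
  rw [Nat.div_eq_of_lt (by omega), funext_iff]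
  simp [Nat.lt_one_iff]

lemma sum_range_mul_eq {M n : ℕ} (f : ℕ → ℂ) :
    ∑ p ∈ Finset.range (M * n), f p
      = ∑ q ∈ Finset.range M, ∑ u ∈ Finset.range n, f (q * n + u) := by
  induction M with
  | zero => simp
  | succ M ih =>
      rw [Nat.succ_mul, Finset.sum_range_add, ih, Finset.sum_range_succ]

lemma integral_wal_eq_zero {b : ℕ} (hb2 : 2 ≤ b) {k : ℕ} (hk : k ≠ 0) :
    ∫ x : ℝ, wal b k x = 0 := by
  have hb0 : 0 < b := by omega
  have hbR : (0:ℝ) < b := by exact_mod_cast hb0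
  have hbC : (b:ℂ) ≠ 0 := by exact_mod_cast hb0.ne'
  set m := Nat.log b k with hm
  set d : ℕ → ℕ := fun i => k / b ^ i % b with hd
  have hpow_le : b ^ m ≤ k := Nat.pow_log_le_self b hk
  have hk_lt : k < b ^ (m + 1) := Nat.lt_pow_succ_log_self (by omega) k
  have hmk : m ≤ k := le_of_lt (lt_of_lt_of_le
    (lt_of_lt_of_le (Nat.lt_two_pow_self (n := m)) (Nat.pow_le_pow_left hb2 m)) hpow_le)
  have hdm_eq : d m = k / b ^ m := by
    have : k / b ^ m < b := Nat.div_lt_of_lt_mul (by rwa [← pow_succ])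
    simpa [hd] using Nat.mod_eq_of_lt this
  have hdm_pos : 0 < d m := by
    rw [hdm_eq]
    exact Nat.one_le_div_iff (pow_pos hb0 m) |>.2 hpow_le
  have hdm_lt : d m < b := Nat.mod_lt _ hb0
  have hd_high : ∀ i, m < i → d i = 0 := by
    intro i hi
    have : k < b ^ i := lt_of_lt_of_le hk_lt (Nat.pow_le_pow_right (by omega) hi)
    simp [hd, Nat.div_eq_of_lt this]
  set B := b ^ (m + 1) with hB
  have hB0 : 0 < B := pow_pos hb0 _
  have hBR : (0:ℝ) < (B:ℝ) := by exact_mod_cast hB0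
  set c : ℂ := 2 * Real.pi * Complex.I / b with hc
  set S : ℕ → ℂ := fun p =>
    ∑ i ∈ Finset.range (k+1), ((d i : ℂ)) * ((p / b ^ (m - i) % b : ℕ) : ℂ) with hS
  set g : ℕ → ℂ := fun p => Complex.exp (c * S p) with hg
  -- Step A: pointwise identity
  have key : ∀ x : ℝ, wal b k x
      = ∑ p ∈ Finset.range B,
          Set.indicator (Set.Ico ((p:ℝ)/(B:ℝ)) (((p:ℝ)+1)/(B:ℝ))) (fun _ => g p) x := by
    intro x
    by_cases hx : x ∈ Set.Ico (0:ℝ) 1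
    · obtain ⟨hx0, hx1⟩ := hx
      have hxB0 : 0 ≤ x * B := by positivity
      set p := ⌊x * (B:ℝ)⌋₊ with hp
      have hp_le : (p:ℝ) ≤ x * B := Nat.floor_le hxB0
      have hp_lt : x * B < p + 1 := Nat.lt_floor_add_one _
      have hpB : p < B := by
        rw [hp, Nat.floor_lt hxB0]
        nlinarith
      have hxmem : x ∈ Set.Ico ((p:ℝ)/(B:ℝ)) (((p:ℝ)+1)/(B:ℝ)) := by
        constructor
        · rw [div_le_iff₀ hBR]; linarith
        · rw [lt_div_iff₀ hBR]; linarith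
      rw [Finset.sum_eq_single_of_mem p (Finset.mem_range.2 hpB)]
      · rw [Set.indicator_of_mem hxmem]
        rw [wal, if_pos ⟨hx0, hx1⟩, hg]
        congr 1
        rw [hS]
        congr 1
        refine Finset.sum_congr rfl fun i hi => ?_
        rcases le_or_gt i m with him | him
        · -- floor computation
          congr 1
          have hfloor : ⌊x * (b:ℝ) ^ (i+1)⌋ = ((p / b ^ (m - i) : ℕ) : ℤ) := by
            set M := b ^ (m - i) with hM
            have hM0 : 0 < M := pow_pos hb0 _
            have hMR : (0:ℝ) < (M:ℝ) := by exact_mod_cast hM0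
            have hBM : B = b ^ (i + 1) * M := by
              rw [hB, hM, ← pow_add]
              congr 1
              omega
            set q := p / M with hq
            have hq_le : q * M ≤ p := Nat.div_mul_le_self p M
            have hq_lt : p < M * (q + 1) := by
              calc p = M * (p / M) + p % M := (Nat.div_add_mod p M).symm
                _ < M * (p / M) + M := Nat.add_lt_add_left (Nat.mod_lt p hM0) _
                _ = M * (p / M + 1) := by ring
            rw [Int.floor_eq_iff]
            constructor
            · have h1 : ((q * M : ℕ) : ℝ) ≤ x * B := le_trans (by exact_mod_cast hq_le) hp_le
              rw [hBM] at h1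
              push_cast at h1 ⊢
              have h2 : (q:ℝ) * M ≤ (x * (b:ℝ)^(i+1)) * M := by nlinarith
              exact le_of_mul_le_mul_right h2 hMR
            · have h1 : x * B < ((M * (q + 1) : ℕ) : ℝ) := by
                refine lt_of_lt_of_le hp_lt ?_
                exact_mod_cast hq_lt
              rw [hBM] at h1
              push_cast at h1 ⊢
              have h2 : (x * (b:ℝ)^(i+1)) * M < ((q:ℝ) + 1) * M := by nlinarith
              exact lt_of_mul_lt_mul_right h2 hMR.le
          rw [hfloor]
          norm_cast
        · have h0 : k / b ^ i % b = 0 := hd_high i him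
          simp [hd, h0]
      · intro q hq hqp
        refine Set.indicator_of_notMem ?_ _
        rintro ⟨hq1, hq2⟩
        apply hqp
        rw [div_le_iff₀ hBR] at hq1
        rw [lt_div_iff₀ hBR] at hq2
        have : ⌊x * (B:ℝ)⌋₊ = q := by
          rw [Nat.floor_eq_iff hxB0]
          constructor
          · linarith
          · push_cast; linarith
        omega
    · rw [wal, if_neg hx]
      refine (Finset.sum_eq_zero fun q hq => ?_).symm
      refine Set.indicator_of_notMem ?_ _
      rintro ⟨hq1, hq2⟩
      apply hx
      have hqB : q + 1 ≤ B := Finset.mem_range.1 hq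
      constructor
      · have : (0:ℝ) ≤ (q:ℝ)/(B:ℝ) := by positivity
        linarith
      · have : ((q:ℝ)+1)/(B:ℝ) ≤ 1 := by
          rw [div_le_one hBR]
          exact_mod_cast hqB
        linarith
  -- Step C : the sum of g over range B is zero
  set z : ℂ := Complex.exp (c * (d m : ℂ)) with hz
  have hz_pow : z ^ b = 1 := by
    rw [hz, ← Complex.exp_nat_mul]
    have : (b:ℂ) * (c * (d m : ℂ)) = (d m : ℂ) * (2 * Real.pi * Complex.I) := by
      rw [hc]; field_simp
    rw [this]
    exact_mod_cast Complex.exp_int_mul_two_pi_mul_I (d m : ℤ)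
  have hz_ne : z ≠ 1 := by
    intro h
    rw [hz, Complex.exp_eq_one_iff] at h
    obtain ⟨n, hn⟩ := h
    rw [hc] at hn
    have h2pi : (2 * (Real.pi:ℂ) * Complex.I : ℂ) ≠ 0 := by
      simp [Real.pi_ne_zero, Complex.I_ne_zero]
    have h1 : (2 * (Real.pi:ℂ) * I) * (d m : ℂ) = (2 * (Real.pi:ℂ) * I) * ((n : ℂ) * b) := by
      field_simp at hn
      linear_combination (2 * (Real.pi:ℂ) * I) * hn
    have h2 : ((d m : ℂ)) = (n:ℂ) * b := mul_left_cancel₀ h2pi h1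
    have h3 : (d m : ℤ) = n * b := by exact_mod_cast h2
    have hdvd : (b:ℤ) ∣ (d m : ℤ) := ⟨n, by linarith [h3]⟩
    have : (d m : ℤ) = 0 := Int.eq_zero_of_abs_lt_dvd hdvd (by
      rw [Int.abs_natCast]
      exact_mod_cast hdm_lt)
    simp at this
    omega
  have hgeom : ∑ u ∈ Finset.range b, z ^ u = 0 := by
    rw [geom_sum_eq hz_ne, hz_pow]
    simp
  have hsum : ∑ p ∈ Finset.range B, g p = 0 := by
    have hBmul : B = b ^ m * b := by rw [hB, pow_succ]
    rw [hBmul, sum_range_mul_eq]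
    refine Finset.sum_eq_zero fun q hq => ?_
    have hstep : ∀ u < b, g (q * b + u) = g (q * b) * z ^ u := by
      intro u hu
      have hSdiff : S (q * b + u) = S (q * b) + (d m : ℂ) * u := by
        simp only [hS]
        have hterm : ∀ i ∈ Finset.range (k+1),
            ((d i : ℂ)) * (((q * b + u) / b ^ (m - i) % b : ℕ) : ℂ)
              = ((d i : ℂ)) * (((q * b) / b ^ (m - i) % b : ℕ) : ℂ)
                + (if i = m then (d m : ℂ) * u else 0) := by
          intro i hi
          rcases eq_or_ne i m with rfl | hne
          · simp only [if_pos rfl, Nat.sub_self, pow_zero, Nat.div_one]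
            rw [Nat.mul_add_mod', Nat.mod_eq_of_lt hu, Nat.mul_mod_left]
            push_cast
            ring
          · rw [if_neg hne, add_zero]
            rcases lt_or_gt_of_ne hne with hlt | hgt
            · have hq1 : (q * b + u) / b ^ (m - i) = q * b / b ^ (m - i) := by
                have hmi : m - i = (m - i - 1) + 1 := by omega
                have hpow : b ^ (m - i) = b * b ^ (m - i - 1) := by
                  conv_lhs => rw [hmi]
                  rw [pow_succ, mul_comm]
                rw [hpow, ← Nat.div_div_eq_div_mul, ← Nat.div_div_eq_div_mul,
                  mul_comm q b, Nat.mul_add_div hb0, Nat.div_eq_of_lt hu, add_zero,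
                  Nat.mul_div_cancel_left _ hb0]
              rw [hq1]
            · have h0 : k / b ^ i % b = 0 := hd_high i hgt
              simp [hd, h0]
        rw [Finset.sum_congr rfl hterm, Finset.sum_add_distrib,
          Finset.sum_ite_eq' (Finset.range (k+1)) m]
        rw [if_pos (Finset.mem_range.2 (by omega))]
      rw [hg]
      simp only
      rw [hSdiff, mul_add, Complex.exp_add]
      congr 1
      rw [← Complex.exp_nat_mul]
      congr 1
      ring
    calc ∑ u ∈ Finset.range b, g (q * b + u)
        = ∑ u ∈ Finset.range b, g (q * b) * z ^ u :=
          Finset.sum_congr rfl fun u hu => hstep u (Finset.mem_range.1 hu)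
      _ = g (q * b) * ∑ u ∈ Finset.range b, z ^ u := by rw [Finset.mul_sum]
      _ = 0 := by rw [hgeom, mul_zero]
  -- Step B : compute the integral
  calc ∫ x : ℝ, wal b k x
      = ∫ x : ℝ, ∑ p ∈ Finset.range B,
          Set.indicator (Set.Ico ((p:ℝ)/(B:ℝ)) (((p:ℝ)+1)/(B:ℝ))) (fun _ => g p) x := by
        exact integral_congr_ae (Filter.Eventually.of_forall key)
    _ = ∑ p ∈ Finset.range B,
          ∫ x : ℝ, Set.indicator (Set.Ico ((p:ℝ)/(B:ℝ)) (((p:ℝ)+1)/(B:ℝ))) (fun _ => g p) x := by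
        refine integral_finset_sum _ fun p _ => ?_
        rw [integrable_indicator_iff measurableSet_Ico]
        exact integrableOn_const measure_Ico_lt_top.ne
    _ = ∑ p ∈ Finset.range B, ((1:ℝ)/(B:ℝ)) • g p := by
        refine Finset.sum_congr rfl fun p _ => ?_
        rw [integral_indicator_const _ measurableSet_Ico, measureReal_def, Real.volume_Ico]
        congr 1
        have hdd : ((p:ℝ)+1)/(B:ℝ) - (p:ℝ)/(B:ℝ) = 1/(B:ℝ) := by field_simp; ring
        rw [hdd, ENNReal.toReal_ofReal (by positivity)]
    _ = ((1:ℝ)/(B:ℝ)) • ∑ p ∈ Finset.range B, g p := by rw [Finset.smul_sum]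
    _ = 0 := by rw [hsum, smul_zero]

lemma integral_wdil_eq_zero {b : ℕ} (hb2 : 2 ≤ b) (j l : ℤ) {k : ℕ} (hk : k ≠ 0) :
    ∫ t : ℝ, wdil b j k l t = 0 := by
  unfold wdil
  rw [MeasureTheory.integral_const_mul]
  have h1 : (fun t : ℝ => wal b k ((b:ℝ)^(-j) * t - (l:ℝ)))
      = fun t => (fun y => wal b k (y - (l:ℝ))) ((b:ℝ)^(-j) * t) := rfl
  have h2 : ∫ t : ℝ, wal b k ((b:ℝ)^(-j) * t - (l:ℝ)) = 0 := by
    rw [h1, MeasureTheory.Measure.integral_comp_mul_left (fun y => wal b k (y - (l:ℝ))) ((b:ℝ)^(-j)),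
      integral_sub_right_eq_self (wal b k) ((l:ℝ)), integral_wal_eq_zero hb2 hk, smul_zero]
  rw [h2, mul_zero]

theorem stmt_6 (b : ℕ) (hb : b.Prime) (s N : ℕ) (x : ℕ → Fin s → ℝ)
    (j l : Fin s → ℤ) (lam : ℕ → ℝ)
    (hlam : ∀ n ∈ (Finset.range N).filter (fun n => x n ∈ bigBox b j l),
      lam n = (b:ℝ) ^ (∑ i, j i) /
        (((Finset.range N).filter (fun n => x n ∈ bigBox b j l)).card : ℝ)) :
    (0 < ((Finset.range N).filter (fun n => x n ∈ bigBox b j l)).card →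
        deltaQ b N lam x j 0 l = 0) ∧
    (((Finset.range N).filter (fun n => x n ∈ bigBox b j l)).card = 0 →
        deltaQ b N lam x j 0 l = (b:ℝ) ^ ((∑ i, (j i : ℝ))/2)) ∧
    (∀ r : Fin s → ℕ, ((Finset.range N).filter (fun n => x n ∈ bigBox b j l)).card = 0 →
        r ≠ 0 → deltaQ b N lam x j r l = 0) := by
  have hb2 : 2 ≤ b := hb.two_le
  have hbR : (0:ℝ) < b := by exact_mod_cast (by omega : 0 < b)
  set F := (Finset.range N).filter (fun n => x n ∈ bigBox b j l) with hF
  set sj : ℝ := ∑ i, ((j i : ℤ) : ℝ) with hsj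
  set C : ℝ := (b:ℝ) ^ (-sj/2) with hC
  set D : ℝ := (b:ℝ) ^ (sj/2) with hD
  have hD0 : 0 ≤ D := Real.rpow_nonneg hbR.le _
  -- the value of `wt` at frequency 0
  have hwt0 : ∀ y : Fin s → ℝ, wt b j 0 l y = if y ∈ bigBox b j l then (C:ℂ) else 0 := by
    intro y
    by_cases hy : y ∈ bigBox b j l
    · rw [if_pos hy, bigBox, Set.mem_univ_pi] at *
      rw [wt]
      have hfac : ∀ i : Fin s, wdil b (j i) ((0 : Fin s → ℕ) i) (l i) (y i)
          = (((b:ℝ) ^ (-((j i : ℤ):ℝ)/2) : ℝ) : ℂ) := by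
        intro i
        rw [Pi.zero_apply, wdil, wal_zero_eq_s6, if_pos ((shift_mem_iff hbR (j i) (l i) (y i)).2 (hy i)),
          mul_one]
      rw [Finset.prod_congr rfl (fun i _ => hfac i)]
      rw [← Complex.ofReal_prod]
      congr 1
      rw [prod_rpow_sum _ hbR]
      congr 1
      rw [hsj, ← Finset.sum_div, ← Finset.sum_neg_distrib]
    · rw [if_neg hy]
      exact wt_eq_zero hbR hy
  -- the integral of `wt` at frequency 0
  have hIzero : (∫ y : Fin s → ℝ, wt b j 0 l y) = (D:ℂ) := by
    have hmeas : MeasurableSet (bigBox b j l) :=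
      MeasurableSet.univ_pi (fun i => measurableSet_Ico)
    have h1 : (∫ y : Fin s → ℝ, wt b j 0 l y)
        = ∫ y : Fin s → ℝ, (bigBox b j l).indicator (fun _ => (C:ℂ)) y := by
      refine integral_congr_ae (Filter.Eventually.of_forall fun y => ?_)
      rw [hwt0 y, Set.indicator_apply]
    rw [h1, integral_indicator_const _ hmeas]
    have hvol : (volume (bigBox b j l)).toReal = (b:ℝ) ^ sj := by
      rw [bigBox, volume_pi_pi]
      rw [ENNReal.toReal_prod]
      have hfac : ∀ i : Fin s, (volume (Set.Ico ((b:ℝ)^(j i) * ((l i : ℤ):ℝ))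
          ((b:ℝ)^(j i) * (((l i : ℤ):ℝ) + 1)))).toReal = (b:ℝ) ^ ((j i : ℤ):ℝ) := by
        intro i
        rw [Real.volume_Ico]
        have h2 : (b:ℝ)^(j i) * (((l i : ℤ):ℝ) + 1) - (b:ℝ)^(j i) * ((l i : ℤ):ℝ)
            = (b:ℝ)^(j i) := by ring
        rw [h2, ENNReal.toReal_ofReal (le_of_lt (zpow_pos hbR _)), Real.rpow_intCast]
      rw [Finset.prod_congr rfl (fun i _ => hfac i), prod_rpow_sum _ hbR]
    rw [measureReal_def, hvol, real_smul, ← Complex.ofReal_mul]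
    congr 1
    rw [hD, hC, ← Real.rpow_add hbR]
    congr 1
    ring
  obtain hcard | hcard := Nat.eq_zero_or_pos F.card
  · -- card = 0 cases
    have hempty : F = ∅ := Finset.card_eq_zero.1 hcard
    have hnot : ∀ n ∈ Finset.range N, x n ∉ bigBox b j l := by
      intro n hn hmem
      have : n ∈ F := by rw [hF]; exact Finset.mem_filter.2 ⟨hn, hmem⟩
      rw [hempty] at this
      exact absurd this (Finset.notMem_empty n)
    have hQ : ∀ k : Fin s → ℕ, (∑ n ∈ Finset.range N, (lam n : ℂ) * wt b j k l (x n)) = 0 := by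
      intro k
      refine Finset.sum_eq_zero fun n hn => ?_
      rw [wt_eq_zero hbR (hnot n hn), mul_zero]
    refine ⟨fun h => absurd hcard (by omega), fun _ => ?_, fun r _ hr => ?_⟩
    · rw [deltaQ, blockF_zero hb2, Finset.sum_singleton, hQ, hIzero, zero_sub, norm_neg,
        Complex.norm_real, Real.norm_eq_abs, _root_.abs_of_nonneg hD0, Real.sqrt_sq hD0]
    · rw [deltaQ]
      have hterm : ∀ k ∈ blockF b r,
          ‖(∑ n ∈ Finset.range N, (lam n : ℂ) * wt b j k l (x n)) -
            ∫ y : Fin s → ℝ, wt b j k l y‖ ^ 2 = 0 := by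
        intro k hk
        obtain ⟨i0, hi0⟩ := Function.ne_iff.1 hr
        have hki0 : k i0 ≠ 0 := by
          rw [blockF, Fintype.mem_piFinset] at hk
          have := (Finset.mem_Ico.1 (hk i0)).1
          have hge : 1 ≤ b ^ (r i0) / b :=
            (Nat.one_le_div_iff (by omega)).2 (Nat.le_self_pow hi0 b)
          omega
        have hI : (∫ y : Fin s → ℝ, wt b j k l y) = 0 := by
          have heq : (fun y : Fin s → ℝ => wt b j k l y)
              = fun y => ∏ i, wdil b (j i) (k i) (l i) (y i) := rfl
          rw [heq, MeasureTheory.volume_pi, MeasureTheory.integral_fintype_prod_eq_prod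
            (f := fun i => wdil b (j i) (k i) (l i))]
          exact Finset.prod_eq_zero (Finset.mem_univ i0) (integral_wdil_eq_zero hb2 _ _ hki0)
        rw [hQ, hI, sub_zero, norm_zero]
        norm_num
      rw [Finset.sum_congr rfl hterm]
      simp
  · -- card > 0 case
    have hcardR : (0:ℝ) < (F.card : ℝ) := by exact_mod_cast hcard
    refine ⟨fun _ => ?_, fun h => absurd h (by omega), fun r h _ => absurd h (by omega)⟩
    have hQ : (∑ n ∈ Finset.range N, (lam n : ℂ) * wt b j (0 : Fin s → ℕ) l (x n)) = (D:ℂ) := by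
      rw [← Finset.sum_filter_add_sum_filter_not (Finset.range N) (fun n => x n ∈ bigBox b j l)]
      have hs2 : (∑ n ∈ (Finset.range N).filter (fun n => ¬ x n ∈ bigBox b j l),
          (lam n : ℂ) * wt b j (0 : Fin s → ℕ) l (x n)) = 0 := by
        refine Finset.sum_eq_zero fun n hn => ?_
        rw [wt_eq_zero hbR (Finset.mem_filter.1 hn).2, mul_zero]
      have hs1 : (∑ n ∈ (Finset.range N).filter (fun n => x n ∈ bigBox b j l),
          (lam n : ℂ) * wt b j (0 : Fin s → ℕ) l (x n)) = (D:ℂ) := by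
        have hterm : ∀ n ∈ (Finset.range N).filter (fun n => x n ∈ bigBox b j l),
            (lam n : ℂ) * wt b j (0 : Fin s → ℕ) l (x n)
              = (((b:ℝ) ^ (∑ i, j i) / (F.card : ℝ) * C : ℝ) : ℂ) := by
          intro n hn
          rw [hwt0, if_pos (Finset.mem_filter.1 hn).2, hlam n hn]
          push_cast
          ring
        rw [Finset.sum_congr rfl hterm, Finset.sum_const]
        have hFcard : ((Finset.range N).filter (fun n => x n ∈ bigBox b j l)).card = F.card := rfl
        rw [hFcard, nsmul_eq_mul, ← Complex.ofReal_natCast, ← Complex.ofReal_mul]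
        congr 1
        rw [hD, hC]
        have hzp : (b:ℝ) ^ (∑ i, j i) = (b:ℝ) ^ sj := by
          rw [hsj, ← Real.rpow_intCast (b:ℝ) (∑ i, j i)]
          congr 1
          push_cast
          rfl
        field_simp [hzp]
        rw [hzp, ← Real.rpow_add hbR]
        congr 1
        ring
      rw [hs1, hs2, add_zero]
    rw [deltaQ, blockF_zero hb2, Finset.sum_singleton, hQ, hIzero, sub_self, norm_zero]
    simp
end
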